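/- arXiv:1901.01861 — 4 statements merged into one kernel-verified Lean document; each statement's English description precedes it below -/
import Mathlib

section
/- Let G be a simple graph with maximum degree Δ ≤ k, let X be its set of maximum-degree vertices, and let u be a vertex not in X ∪ N(X). If G − u (the subgraph induced by V(G) \ {u}) has a proper k-edge colouring, then so does G. -/
open SimpleGraph

/-- `c` is a proper `k`-edge colouring of `G`: edges sharing an end-vertex get distinct colours. -/
def ProperEdgeColoring {V : Type*} (G : SimpleGraph V) (k : ℕ) (c : G.edgeSet → Fin k) : Prop :=
  ∀ e f : G.edgeSet, e ≠ f → (∃ v : V, v ∈ (e : Sym2 V) ∧ v ∈ (f : Sym2 V)) → c e ≠ c f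

/-- `G` admits a proper `k`-edge colouring. -/
def EdgeColorable {V : Type*} (G : SimpleGraph V) (k : ℕ) : Prop :=
  ∃ c : G.edgeSet → Fin k, ProperEdgeColoring G k c

namespace VizingExt

variable {V : Type*} [Fintype V] [DecidableEq V] {G : SimpleGraph V} {k : ℕ}

/-- A partial proper edge colouring of `G` with `k` colours. -/
structure PC (G : SimpleGraph V) (k : ℕ) where
  f : V → V → Option (Fin k)
  symm : ∀ x y, f x y = f y x
  adj : ∀ x y c, f x y = some c → G.Adj x y
  proper : ∀ x y z c, f x y = some c → f x z = some c → y = z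

/-- Colour `c` does not appear on any edge at `x`. -/
def Free (C : PC G k) (x : V) (c : Fin k) : Prop := ∀ y, C.f x y ≠ some c

lemma free_mono {C C' : PC G k} {x : V}
    (h : ∀ y c', C'.f x y = some c' → C.f x y = some c')
    {c : Fin k} (hc : Free C x c) : Free C' x c := fun y hy => hc y (h y c hy)

lemma exists_free [DecidableRel G.Adj] (C : PC G k) (x : V) (h : G.degree x < k) :
    ∃ c : Fin k, Free C x c := by
  classical
  by_contra hc
  push_neg at hc
  have h1 : ∀ c : Fin k, ∃ y, C.f x y = some c := by
    intro c
    have := hc c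
    unfold Free at this
    push_neg at this
    exact this
  choose g hg using h1
  have hginj : Function.Injective g := by
    intro a b hab
    have : (some a : Option (Fin k)) = some b := by rw [← hg a, hab, hg b]
    exact Option.some_injective _ this
  have hcard : (Finset.univ : Finset (Fin k)).card ≤ (G.neighborFinset x).card := by
    apply Finset.card_le_card_of_injOn g
    · intro c _
      exact (G.mem_neighborFinset x (g c)).mpr (C.adj x (g c) c (hg c))
    · exact hginj.injOn
  simp only [Finset.card_univ, Fintype.card_fin] at hcard
  rw [← SimpleGraph.card_neighborFinset_eq_degree] at h
  exact absurd (lt_of_le_of_lt hcard h) (lt_irrefl _)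

/-- Remove the colour of edge `x y`. -/
def uncolor (C : PC G k) (x y : V) : PC G k where
  f p q := if (p = x ∧ q = y) ∨ (p = y ∧ q = x) then none else C.f p q
  symm p q := by
    by_cases h : (p = x ∧ q = y) ∨ (p = y ∧ q = x)
    · rw [if_pos h, if_pos (by tauto)]
    · rw [if_neg h, if_neg (by tauto), C.symm]
  adj p q c h := by
    split_ifs at h
    exact C.adj _ _ _ h
  proper p q r c h1 h2 := by
    split_ifs at h1 h2
    exact C.proper _ _ _ _ h1 h2

lemma uncolor_f_eq (C : PC G k) (x y p q : V)
    (h : ¬ ((p = x ∧ q = y) ∨ (p = y ∧ q = x))) :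
    (uncolor C x y).f p q = C.f p q := if_neg h

lemma uncolor_f_some {C : PC G k} {x y p q : V} {c : Fin k}
    (h : (uncolor C x y).f p q = some c) : C.f p q = some c := by
  unfold uncolor at h; dsimp at h; split_ifs at h; exact h

/-- Colour edge `x y` with a colour free at both endpoints. -/
def colorEdge (C : PC G k) (x y : V) (c : Fin k) (hxy : G.Adj x y)
    (hx : Free C x c) (hy : Free C y c) : PC G k where
  f p q := if (p = x ∧ q = y) ∨ (p = y ∧ q = x) then some c else C.f p q
  symm p q := by
    by_cases h : (p = x ∧ q = y) ∨ (p = y ∧ q = x)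
    · rw [if_pos h, if_pos (by tauto)]
    · rw [if_neg h, if_neg (by tauto), C.symm]
  adj p q d h := by
    split_ifs at h with hpq
    · rcases hpq with ⟨rfl, rfl⟩ | ⟨rfl, rfl⟩
      · exact hxy
      · exact hxy.symm
    · exact C.adj _ _ _ h
  proper p q r d h1 h2 := by
    have hne : x ≠ y := hxy.ne
    split_ifs at h1 h2 with h1c h2c h2c
    · rcases h1c with ⟨rfl, rfl⟩ | ⟨rfl, rfl⟩ <;>
        rcases h2c with ⟨h', rfl⟩ | ⟨h', rfl⟩ <;> first | rfl | (exact absurd h' (by tauto))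
    · -- h1 : edge is the new one, so d = c; h2 : old edge at p with colour c
      have hdc : d = c := by injection h1.symm
      subst hdc
      rcases h1c with ⟨rfl, rfl⟩ | ⟨rfl, rfl⟩
      · exact absurd h2 (hx r)
      · exact absurd h2 (hy r)
    · have hdc : d = c := by injection h2.symm
      subst hdc
      rcases h2c with ⟨rfl, rfl⟩ | ⟨rfl, rfl⟩
      · exact absurd h1 (hx q)
      · exact absurd h1 (hy q)
    · exact C.proper _ _ _ _ h1 h2

lemma colorEdge_f_eq (C : PC G k) (x y : V) (c : Fin k) (hxy hx hy) (p q : V)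
    (h : ¬ ((p = x ∧ q = y) ∨ (p = y ∧ q = x))) :
    (colorEdge C x y c hxy hx hy).f p q = C.f p q := if_neg h

lemma colorEdge_f_self (C : PC G k) (x y : V) (c : Fin k) (hxy hx hy) :
    (colorEdge C x y c hxy hx hy).f x y = some c := if_pos (Or.inl ⟨rfl, rfl⟩)

lemma colorEdge_colored {C : PC G k} {x y : V} {c : Fin k} {hxy hx hy} (p q : V)
    (h : C.f p q ≠ none) : (colorEdge C x y c hxy hx hy).f p q ≠ none := by
  unfold colorEdge; dsimp; split_ifs
  · simp
  · exact h

/-! ### Kempe chains -/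

/-- The subgraph of edges coloured `a` or `b`. -/
def kempe (C : PC G k) (a b : Fin k) : SimpleGraph V where
  Adj x y := C.f x y = some a ∨ C.f x y = some b
  symm := ⟨fun x y h => by rwa [C.symm y x]⟩
  loopless := ⟨fun x h => by
    rcases h with h | h <;> exact G.loopless.irrefl x (C.adj x x _ h)⟩

lemma kempe_adj_iff {C : PC G k} {a b : Fin k} {x y : V} :
    (kempe C a b).Adj x y ↔ (C.f x y = some a ∨ C.f x y = some b) := Iff.rfl

lemma kempe_pendant_a {C : PC G k} {a b : Fin k} {x : V} (h : Free C x a) :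
    ∀ y z, (kempe C a b).Adj x y → (kempe C a b).Adj x z → y = z := by
  intro y z hy hz
  rcases hy with hy | hy
  · exact absurd hy (h y)
  rcases hz with hz | hz
  · exact absurd hz (h z)
  exact C.proper x y z b hy hz

lemma kempe_pendant_b {C : PC G k} {a b : Fin k} {x : V} (h : Free C x b) :
    ∀ y z, (kempe C a b).Adj x y → (kempe C a b).Adj x z → y = z := by
  intro y z hy hz
  rcases hy with hy | hy
  swap
  · exact absurd hy (h y)
  rcases hz with hz | hz
  swap
  · exact absurd hz (h z)
  exact C.proper x y z a hy hz

lemma kempe_two {C : PC G k} {a b : Fin k} :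
    ∀ w x y z, (kempe C a b).Adj w x → (kempe C a b).Adj w y → (kempe C a b).Adj w z →
      x = y ∨ x = z ∨ y = z := by
  intro w x y z hx hy hz
  rcases hx with hx | hx <;> rcases hy with hy | hy <;> rcases hz with hz | hz
  all_goals first
    | (left; exact C.proper w x y _ hx hy)
    | (right; left; exact C.proper w x z _ hx hz)
    | (right; right; exact C.proper w y z _ hy hz)

/-! ### Walk structure of subgraphs of maximum degree two -/

section Walks

variable {H : SimpleGraph V}

/-- An interior vertex of a path has two distinct neighbours on the path. -/
lemma interior_two {x y z : V} (p : H.Walk x y) (hp : p.IsPath) (hz : z ∈ p.support)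
    (hzx : z ≠ x) (hzy : z ≠ y) :
    ∃ a b, H.Adj z a ∧ H.Adj z b ∧ a ≠ b ∧ a ∈ p.support ∧ b ∈ p.support := by
  obtain ⟨q, r, rfl⟩ := SimpleGraph.Walk.mem_support_iff_exists_append.mp hz
  obtain ⟨a, ha, t1, ht1⟩ := SimpleGraph.Walk.exists_eq_cons_of_ne hzx q.reverse
  obtain ⟨b, hb, t2, ht2⟩ := SimpleGraph.Walk.exists_eq_cons_of_ne hzy r
  have haq : a ∈ q.support := by
    have : a ∈ q.reverse.support := by
      rw [ht1, SimpleGraph.Walk.support_cons]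
      exact List.mem_cons_of_mem _ t1.start_mem_support
    rwa [SimpleGraph.Walk.support_reverse, List.mem_reverse] at this
  have hbr : b ∈ r.support.tail := by
    rw [ht2, SimpleGraph.Walk.support_cons]
    exact t2.start_mem_support
  have hnd : (q.support ++ r.support.tail).Nodup := by
    rw [← SimpleGraph.Walk.support_append]
    exact hp.support_nodup
  have hdisj := List.disjoint_of_nodup_append hnd
  refine ⟨a, b, ha, hb, fun hab => hdisj haq (hab ▸ hbr), ?_, ?_⟩
  · rw [SimpleGraph.Walk.support_append]
    exact List.mem_append_left _ haq
  · rw [SimpleGraph.Walk.support_append]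
    exact List.mem_append_right _ hbr

lemma support_closed
    (hdeg : ∀ w x y z, H.Adj w x → H.Adj w y → H.Adj w z → x = y ∨ x = z ∨ y = z)
    {x y : V} (p : H.Walk x y) (hp : p.IsPath) (hxy : x ≠ y)
    (hx : ∀ s t, H.Adj x s → H.Adj x t → s = t)
    (hy : ∀ s t, H.Adj y s → H.Adj y t → s = t)
    {z z' : V} (hz : z ∈ p.support) (hzz' : H.Adj z z') : z' ∈ p.support := by
  by_cases hzx : z = x
  · subst hzx
    obtain ⟨w, hw, t, ht⟩ := SimpleGraph.Walk.exists_eq_cons_of_ne hxy p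
    have : z' = w := hx z' w hzz' hw
    subst this
    rw [ht, SimpleGraph.Walk.support_cons]
    exact List.mem_cons_of_mem _ t.start_mem_support
  by_cases hzy : z = y
  · subst hzy
    obtain ⟨w, hw, t, ht⟩ := SimpleGraph.Walk.exists_eq_cons_of_ne (Ne.symm hxy) p.reverse
    have : z' = w := hy z' w hzz' hw
    subst this
    have : z' ∈ p.reverse.support := by
      rw [ht, SimpleGraph.Walk.support_cons]
      exact List.mem_cons_of_mem _ t.start_mem_support
    rwa [SimpleGraph.Walk.support_reverse, List.mem_reverse] at this
  obtain ⟨a, b, ha, hb, hab, hap, hbp⟩ := interior_two p hp hz hzx hzy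
  rcases hdeg z a b z' ha hb hzz' with h | h | h
  · exact absurd h hab
  · exact h ▸ hap
  · exact h ▸ hbp

lemma walk_support
    (hdeg : ∀ w x y z, H.Adj w x → H.Adj w y → H.Adj w z → x = y ∨ x = z ∨ y = z)
    {x y : V} (p : H.Walk x y) (hp : p.IsPath) (hxy : x ≠ y)
    (hx : ∀ s t, H.Adj x s → H.Adj x t → s = t)
    (hy : ∀ s t, H.Adj y s → H.Adj y t → s = t)
    {z w : V} (q : H.Walk z w) (hz : z ∈ p.support) : w ∈ p.support := by
  induction q with
  | nil => exact hz
  | cons h t ih => exact ih (support_closed hdeg p hp hxy hx hy hz h)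

/-- A connected graph of maximum degree two cannot have three distinct vertices
of degree at most one. -/
lemma three_endpoint
    (hdeg : ∀ w x y z, H.Adj w x → H.Adj w y → H.Adj w z → x = y ∨ x = z ∨ y = z)
    {a b c : V}
    (pa : ∀ s t, H.Adj a s → H.Adj a t → s = t)
    (pb : ∀ s t, H.Adj b s → H.Adj b t → s = t)
    (pc : ∀ s t, H.Adj c s → H.Adj c t → s = t)
    (hab : a ≠ b) (hac : a ≠ c) (hbc : b ≠ c)
    (h1 : H.Reachable a b) (h2 : H.Reachable a c) : False := by
  obtain ⟨w0⟩ := h1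
  set p : H.Walk a b := (w0.toPath : H.Path a b).1 with hpdef
  have hp : p.IsPath := (w0.toPath).2
  obtain ⟨q⟩ := h2
  have hc : c ∈ p.support :=
    walk_support hdeg p hp hab pa pb q p.start_mem_support
  obtain ⟨s, t, hs, ht, hst, _, _⟩ := interior_two p hp hc (Ne.symm hac) (Ne.symm hbc)
  exact hst (pc s t hs ht)

end Walks

/-! ### The Kempe chain swap -/

/-- Transposition of the two colours `a` and `b`. -/
def swapc (a b c : Fin k) : Fin k := if c = a then b else if c = b then a else c

lemma swapc_a {a b : Fin k} : swapc a b a = b := by simp [swapc]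

lemma swapc_b {a b : Fin k} (hab : a ≠ b) : swapc a b b = a := by
  simp [swapc, Ne.symm hab]

lemma swapc_ne {a b c : Fin k} (hca : c ≠ a) (hcb : c ≠ b) : swapc a b c = c := by
  simp [swapc, hca, hcb]

lemma swapc_invol {a b c : Fin k} (hab : a ≠ b) : swapc a b (swapc a b c) = c := by
  by_cases hca : c = a
  · subst hca; rw [swapc_a, swapc_b hab]
  by_cases hcb : c = b
  · subst hcb; rw [swapc_b hab, swapc_a]
  · rw [swapc_ne hca hcb, swapc_ne hca hcb]

open scoped Classical in
/-- The raw function swapping colours `a`, `b` on the component of `x₀`. -/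
noncomputable def swapf (C : PC G k) (a b : Fin k) (x₀ x y : V) : Option (Fin k) :=
  if (kempe C a b).Reachable x₀ x ∧ (C.f x y = some a ∨ C.f x y = some b)
  then (if C.f x y = some a then some b else some a) else C.f x y

variable {C : PC G k} {a b : Fin k} {x₀ : V}

lemma swapf_of_not_reach {x y : V} (h : ¬ (kempe C a b).Reachable x₀ x) :
    swapf C a b x₀ x y = C.f x y := if_neg (fun hh => h hh.1)

lemma swapf_of_not_edge {x y : V} (h : ¬ (C.f x y = some a ∨ C.f x y = some b)) :
    swapf C a b x₀ x y = C.f x y := if_neg (fun hh => h hh.2)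

lemma swapf_of_a {x y : V} (hr : (kempe C a b).Reachable x₀ x) (h : C.f x y = some a) :
    swapf C a b x₀ x y = some b := by
  rw [swapf, if_pos ⟨hr, Or.inl h⟩, if_pos h]

lemma swapf_of_b {x y : V} (hab : a ≠ b) (hr : (kempe C a b).Reachable x₀ x)
    (h : C.f x y = some b) : swapf C a b x₀ x y = some a := by
  have hna : ¬ C.f x y = some a := by
    rw [h]; intro hh; exact hab (Option.some_injective _ hh).symm
  rw [swapf, if_pos ⟨hr, Or.inr h⟩, if_neg hna]

lemma swapf_reach_iff {x y : V} {c : Fin k} (hab : a ≠ b)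
    (hr : (kempe C a b).Reachable x₀ x) :
    swapf C a b x₀ x y = some c ↔ C.f x y = some (swapc a b c) := by
  by_cases ha : C.f x y = some a
  · rw [swapf_of_a hr ha, ha]
    constructor
    · intro hh
      have : b = c := by injection hh
      subst this
      rw [swapc_b hab]
    · intro hh
      have hac : a = swapc a b c := by injection hh
      have h2 := congrArg (swapc a b) hac
      rw [swapc_a, swapc_invol hab] at h2
      rw [h2]
  by_cases hb : C.f x y = some b
  · rw [swapf_of_b hab hr hb, hb]
    constructor
    · intro hh
      have : a = c := by injection hh
      subst this
      rw [swapc_a]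
    · intro hh
      have hbc : b = swapc a b c := by injection hh
      have h2 := congrArg (swapc a b) hbc
      rw [swapc_b hab, swapc_invol hab] at h2
      rw [h2]
  · rw [swapf_of_not_edge (by tauto)]
    constructor
    · intro hh
      have hca : c ≠ a := fun e => ha (by rw [← e]; exact hh)
      have hcb : c ≠ b := fun e => hb (by rw [← e]; exact hh)
      rwa [swapc_ne hca hcb]
    · intro hh
      by_cases hca : c = a
      · subst hca; rw [swapc_a] at hh; exact absurd hh hb
      by_cases hcb : c = b
      · subst hcb; rw [swapc_b hab] at hh; exact absurd hh ha
      · rwa [swapc_ne hca hcb] at hh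

lemma swapf_symm (hab : a ≠ b) (x y : V) :
    swapf C a b x₀ x y = swapf C a b x₀ y x := by
  by_cases he : C.f x y = some a ∨ C.f x y = some b
  · have hey : C.f y x = some a ∨ C.f y x = some b := by rwa [← C.symm]
    have hadj : (kempe C a b).Adj x y := he
    by_cases hr : (kempe C a b).Reachable x₀ x
    · have hry : (kempe C a b).Reachable x₀ y := hr.trans hadj.reachable
      rcases he with h | h
      · rw [swapf_of_a hr h, swapf_of_a hry (by rwa [← C.symm])]
      · rw [swapf_of_b hab hr h, swapf_of_b hab hry (by rwa [← C.symm])]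
    · have hry : ¬ (kempe C a b).Reachable x₀ y :=
        fun hh => hr (hh.trans hadj.symm.reachable)
      rw [swapf_of_not_reach hr, swapf_of_not_reach hry, C.symm]
  · have hey : ¬ (C.f y x = some a ∨ C.f y x = some b) := by rwa [← C.symm]
    rw [swapf_of_not_edge he, swapf_of_not_edge hey, C.symm]

lemma swapf_some {x y : V} {c : Fin k} (h : swapf C a b x₀ x y = some c) :
    ∃ d, C.f x y = some d := by
  by_cases hr : (kempe C a b).Reachable x₀ x
  · by_cases he : C.f x y = some a ∨ C.f x y = some b
    · rcases he with hh | hh <;> exact ⟨_, hh⟩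
    · exact ⟨c, by rwa [swapf_of_not_edge he] at h⟩
  · exact ⟨c, by rwa [swapf_of_not_reach hr] at h⟩

/-- Swap colours `a` and `b` on the Kempe-chain component of `x₀`. -/
noncomputable def swap (C : PC G k) (a b : Fin k) (hab : a ≠ b) (x₀ : V) : PC G k where
  f := swapf C a b x₀
  symm x y := swapf_symm hab x y
  adj x y c h := by
    obtain ⟨d, hd⟩ := swapf_some h
    exact C.adj x y d hd
  proper x y z c h1 h2 := by
    by_cases hr : (kempe C a b).Reachable x₀ x
    · rw [swapf_reach_iff hab hr] at h1 h2
      exact C.proper _ _ _ _ h1 h2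
    · rw [swapf_of_not_reach hr] at h1 h2
      exact C.proper _ _ _ _ h1 h2

variable {hab : a ≠ b}

lemma swap_f_eq_of_not_reach {x : V} (h : ¬ (kempe C a b).Reachable x₀ x) (y : V) :
    (swap C a b hab x₀).f x y = C.f x y := swapf_of_not_reach h

lemma swap_none_iff {x y : V} :
    (swap C a b hab x₀).f x y = none ↔ C.f x y = none := by
  show swapf C a b x₀ x y = none ↔ _
  by_cases hr : (kempe C a b).Reachable x₀ x
  · constructor
    · intro h
      cases hfc : C.f x y with
      | none => rfl
      | some d =>
        by_cases hda : d = a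
        · subst hda; rw [swapf_of_a hr hfc] at h; exact absurd h (by simp)
        by_cases hdb : d = b
        · subst hdb; rw [swapf_of_b hab hr hfc] at h; exact absurd h (by simp)
        · rw [swapf_of_not_edge (by simp [hfc, hda, hdb])] at h
          rw [hfc] at h; exact absurd h (by simp)
    · intro h
      rw [swapf_of_not_edge (by simp [h])]
      exact h
  · rw [swapf_of_not_reach hr]

lemma swap_some_iff_of_ne {x y : V} {c : Fin k} (hca : c ≠ a) (hcb : c ≠ b) :
    (swap C a b hab x₀).f x y = some c ↔ C.f x y = some c := by
  show swapf C a b x₀ x y = some c ↔ _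
  by_cases hr : (kempe C a b).Reachable x₀ x
  · rw [swapf_reach_iff hab hr, swapc_ne hca hcb]
  · rw [swapf_of_not_reach hr]

lemma swap_free_of_ne {x : V} {c : Fin k} (hca : c ≠ a) (hcb : c ≠ b)
    (h : Free C x c) : Free (swap C a b hab x₀) x c := fun y hy =>
  h y ((swap_some_iff_of_ne hca hcb).mp hy)

lemma swap_free_not_reach {x : V} {c : Fin k} (hr : ¬ (kempe C a b).Reachable x₀ x)
    (h : Free C x c) : Free (swap C a b hab x₀) x c := fun y hy =>
  h y (by rwa [swap_f_eq_of_not_reach hr] at hy)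

lemma swap_free_reach_b {x : V} (hr : (kempe C a b).Reachable x₀ x)
    (h : Free C x b) : Free (swap C a b hab x₀) x a := by
  intro y hy
  have := (swapf_reach_iff hab hr).mp hy
  rw [swapc_a] at this
  exact h y this

/-! ### Fans -/

/-- A Vizing fan at `u`: consecutive edges `u vᵢ₊₁` carry a colour free at `vᵢ`. -/
def IsFan (C : PC G k) (u : V) : List V → Prop
  | [] => True
  | [v] => G.Adj u v
  | v :: w :: t => G.Adj u v ∧ (∃ c, Free C v c ∧ C.f u w = some c) ∧ IsFan C u (w :: t)

lemma isFan_adj {C : PC G k} {u : V} : ∀ {l : List V}, IsFan C u l → ∀ w ∈ l, G.Adj u w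
  | [], _, w, hw => absurd hw (List.not_mem_nil)
  | [v], h, w, hw => by
      rcases List.mem_singleton.mp hw with rfl
      exact h
  | v :: v' :: t, h, w, hw => by
      rcases List.mem_cons.mp hw with rfl | hw
      · exact h.1
      · exact isFan_adj h.2.2 w hw

lemma isFan_chain {C : PC G k} {u : V} :
    ∀ {l : List V}, IsFan C u l → ∀ p ∈ l.zip l.tail, ∃ c, Free C p.1 c ∧ C.f u p.2 = some c
  | [], _, p, hp => absurd hp (List.not_mem_nil)
  | [v], _, p, hp => by simp at hp
  | v :: v' :: t, h, p, hp => by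
      rcases List.mem_cons.mp hp with rfl | hp
      · exact h.2.1
      · exact isFan_chain h.2.2 p hp

lemma isFan_of_chain {C : PC G k} {u : V} :
    ∀ {l : List V}, (∀ w ∈ l, G.Adj u w) →
      (∀ p ∈ l.zip l.tail, ∃ c, Free C p.1 c ∧ C.f u p.2 = some c) → IsFan C u l
  | [], _, _ => trivial
  | [v], hadj, _ => hadj v (List.mem_singleton_self v)
  | v :: v' :: t, hadj, hch => by
      refine ⟨hadj v (List.mem_cons_self), hch (v, v') (List.mem_cons_self), ?_⟩
      exact isFan_of_chain (fun w hw => hadj w (List.mem_cons_of_mem _ hw))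
        (fun p hp => hch p (List.mem_cons_of_mem _ hp))

lemma isFan_prefix {C : PC G k} {u : V} :
    ∀ {l₁ l₂ : List V}, IsFan C u (l₁ ++ l₂) → IsFan C u l₁ := by
  intro l₁
  induction l₁ with
  | nil => intro l₂ _; trivial
  | cons v t ih =>
    intro l₂ h
    cases t with
    | nil =>
      cases l₂ with
      | nil => exact h
      | cons w t₂ => exact h.1
    | cons v' t' =>
      exact ⟨h.1, h.2.1, ih (l₂ := l₂) h.2.2⟩

lemma isFan_append_singleton {C : PC G k} {u : V} :
    ∀ {l : List V} (hl : l ≠ []) {w : V} {c : Fin k},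
      IsFan C u l → Free C (l.getLast hl) c → C.f u w = some c → G.Adj u w →
      IsFan C u (l ++ [w])
  | [], hl, _, _, _, _, _, _ => absurd rfl hl
  | [v], _, w, c, hf, hfree, hcol, hadj => ⟨hf, ⟨c, hfree, hcol⟩, hadj⟩
  | v :: v' :: t, _, w, c, hf, hfree, hcol, hadj => by
      refine ⟨hf.1, hf.2.1, ?_⟩
      exact isFan_append_singleton (List.cons_ne_nil _ _) hf.2.2
        (by rwa [List.getLast_cons (List.cons_ne_nil _ _)] at hfree) hcol hadj

lemma isFan_mem_decomp {C : PC G k} {u : V} :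
    ∀ {l : List V} {v₀ : V}, IsFan C u (v₀ :: l) → ∀ w ∈ l,
      ∃ (l₁ l₂ : List V) (p : V) (c : Fin k),
        v₀ :: l = (l₁ ++ [p]) ++ w :: l₂ ∧ Free C p c ∧ C.f u w = some c := by
  intro l
  induction l with
  | nil => intro v₀ _ w hw; exact absurd hw (List.not_mem_nil)
  | cons v' t ih =>
    intro v₀ h w hw
    rcases List.mem_cons.mp hw with rfl | hw
    · obtain ⟨c, hfree, hcol⟩ := h.2.1
      exact ⟨[], t, v₀, c, rfl, hfree, hcol⟩
    · obtain ⟨l₁, l₂, p, c, heq, hfree, hcol⟩ := ih h.2.2 w hw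
      refine ⟨v₀ :: l₁, l₂, p, c, ?_, hfree, hcol⟩
      rw [List.cons_append, List.cons_append, ← heq]

/-- Predecessors in a nodup list are unique. -/
lemma zip_pred_unique :
    ∀ {l : List V}, l.Nodup → ∀ {x x' y : V},
      (x, y) ∈ l.zip l.tail → (x', y) ∈ l.zip l.tail → x = x' := by
  intro l
  induction l with
  | nil => intro _ x x' y h; exact absurd h (List.not_mem_nil)
  | cons v t ih =>
    intro hnd x x' y h1 h2
    cases t with
    | nil => simp at h1
    | cons v' t' =>
      have hzt : (v :: v' :: t').zip (v :: v' :: t').tail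
          = (v, v') :: ((v' :: t').zip ((v' :: t').tail)) := rfl
      rw [hzt] at h1 h2
      have hv' : v' ∉ t' := by
        have := (List.nodup_cons.mp (List.nodup_cons.mp hnd).2).1
        exact this
      rcases List.mem_cons.mp h1 with he1 | h1t <;> rcases List.mem_cons.mp h2 with he2 | h2t
      · rw [Prod.mk.injEq] at he1 he2
        rw [he1.1, he2.1]
      · exfalso
        rw [Prod.mk.injEq] at he1
        have hmem : y ∈ t' := by simpa using (List.of_mem_zip h2t).2
        rw [he1.2] at hmem
        exact hv' hmem
      · exfalso
        rw [Prod.mk.injEq] at he2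
        have hmem : y ∈ t' := by simpa using (List.of_mem_zip h1t).2
        rw [he2.2] at hmem
        exact hv' hmem
      · exact ih (List.nodup_cons.mp hnd).2 h1t h2t

/-- A pair `(p, w)` where the list splits as `(l₁ ++ [p]) ++ w :: l₂` is a consecutive pair. -/
lemma pair_mem_zip_of_decomp (l₁ l₂ : List V) (p w : V) :
    (p, w) ∈ ((l₁ ++ [p]) ++ w :: l₂).zip ((l₁ ++ [p]) ++ w :: l₂).tail := by
  induction l₁ with
  | nil => exact List.mem_cons_self
  | cons v t ih =>
    cases hde : (t ++ [p]) ++ w :: l₂ with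
    | nil => simp at hde
    | cons z zs =>
      have : ((v :: t ++ [p]) ++ w :: l₂) = v :: z :: zs := by
        rw [List.cons_append, List.cons_append, hde]
      rw [this]
      have h2 : (v :: z :: zs).zip (v :: z :: zs).tail
          = (v, z) :: ((z :: zs).zip (z :: zs).tail) := rfl
      rw [h2]
      apply List.mem_cons_of_mem
      rw [← hde]
      exact ih

lemma uncolor_f_self (C : PC G k) (x y : V) : (uncolor C x y).f x y = none :=
  if_pos (Or.inl ⟨rfl, rfl⟩)

/-- Rotating a fan and colouring its last edge. -/
lemma rotate_done {u : V} :
    ∀ (l : List V) (v₀ : V) (C : PC G k), IsFan C u (v₀ :: l) → (v₀ :: l).Nodup →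
      C.f u v₀ = none → ∀ c : Fin k, Free C u c →
      Free C ((v₀ :: l).getLast (List.cons_ne_nil _ _)) c →
      ∃ C' : PC G k, (∀ x y, C.f x y ≠ none → C'.f x y ≠ none) ∧ C'.f u v₀ ≠ none := by
  intro l
  induction l with
  | nil =>
    intro v₀ C hfan hnd h0 c hcu hcl
    have hlast : ([v₀] : List V).getLast (List.cons_ne_nil _ _) = v₀ := rfl
    rw [hlast] at hcl
    have hadj : G.Adj u v₀ := hfan
    refine ⟨colorEdge C u v₀ c hadj hcu hcl, ?_, ?_⟩
    · intro x y hxy; exact colorEdge_colored x y hxy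
    · rw [colorEdge_f_self]; simp
  | cons v₁ t ih =>
    intro v₀ C hfan hnd h0 c hcu hcl
    have hfan' := hfan
    obtain ⟨hadj0, ⟨c₀, hfree0, hcol0⟩, hfan1⟩ := hfan'
    have hune : ∀ w ∈ v₀ :: v₁ :: t, w ≠ u := fun w hw he =>
      G.loopless.irrefl u (he ▸ isFan_adj hfan w hw)
    have hv0u : v₀ ≠ u := hune v₀ (List.mem_cons_self)
    have hv1u : v₁ ≠ u := hune v₁ (List.mem_cons_of_mem _ (List.mem_cons_self))
    have hv01 : v₀ ≠ v₁ := by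
      intro he
      have := (List.nodup_cons.mp hnd).1
      exact this (he ▸ List.mem_cons_self)
    -- the shift : colour u v₀ with c₀ and uncolour u v₁
    have hfu : Free (uncolor C u v₁) u c₀ := by
      intro y hy
      have hy' := uncolor_f_some hy
      have : y = v₁ := C.proper u y v₁ c₀ hy' hcol0
      subst this
      rw [uncolor_f_self] at hy
      exact absurd hy (by simp)
    have hfv0 : Free (uncolor C u v₁) v₀ c₀ := by
      intro y hy
      exact hfree0 y (uncolor_f_some hy)
    set C₁ := colorEdge (uncolor C u v₁) u v₀ c₀ hadj0 hfu hfv0 with hC₁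
    have heval : ∀ x y, ¬ ((x = u ∧ y = v₀) ∨ (x = v₀ ∧ y = u)) →
        ¬ ((x = u ∧ y = v₁) ∨ (x = v₁ ∧ y = u)) → C₁.f x y = C.f x y := by
      intro x y h1 h2
      rw [hC₁, colorEdge_f_eq _ _ _ _ _ _ _ x y h1, uncolor_f_eq _ _ _ x y h2]
    have hC1v0 : C₁.f u v₀ = some c₀ := colorEdge_f_self _ _ _ _ _ _ _
    have hC1v1 : C₁.f u v₁ = none := by
      rw [hC₁, colorEdge_f_eq _ _ _ _ _ _ _ u v₁
        (by rintro (⟨-, h⟩ | ⟨h, -⟩); exact hv01 h.symm; exact hv0u h.symm),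
        uncolor_f_self]
    have hmono : ∀ x, x ≠ u → x ≠ v₀ → ∀ y c'', C₁.f x y = some c'' → C.f x y = some c'' := by
      intro x hxu hxv0 y c'' hy
      rw [hC₁, colorEdge_f_eq _ _ _ _ _ _ _ x y
        (by rintro (⟨h, -⟩ | ⟨h, -⟩); exact hxu h; exact hxv0 h)] at hy
      exact uncolor_f_some hy
    -- the tail is still a fan
    have hfan2 : IsFan C₁ u (v₁ :: t) := by
      apply isFan_of_chain
      · intro w hw; exact isFan_adj hfan1 w hw
      · intro p hp
        obtain ⟨c', hcf, hcc⟩ := isFan_chain hfan1 p hp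
        have hp1mem : p.1 ∈ v₁ :: t := (List.of_mem_zip hp).1
        have hp2mem : p.2 ∈ t := by simpa using (List.of_mem_zip hp).2
        have hp2v0 : p.2 ≠ v₀ := by
          intro he
          exact (List.nodup_cons.mp hnd).1
            (he ▸ List.mem_cons_of_mem _ hp2mem)
        have hp2v1 : p.2 ≠ v₁ := by
          intro he
          exact (List.nodup_cons.mp (List.nodup_cons.mp hnd).2).1 (he ▸ hp2mem)
        refine ⟨c', ?_, ?_⟩
        · -- Free C₁ p.1 c'
          apply free_mono (C := C) _ hcf
          intro y c'' hy
          apply hmono p.1 (hune p.1 (List.mem_cons_of_mem _ hp1mem)) _ y c'' hy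
          intro he
          exact (List.nodup_cons.mp hnd).1 (he ▸ hp1mem)
        · rw [heval u p.2
            (by rintro (⟨-, h⟩ | ⟨h, -⟩); exact hp2v0 h; exact hv0u h.symm)
            (by rintro (⟨-, h⟩ | ⟨h, -⟩); exact hp2v1 h; exact hv1u h.symm)]
          exact hcc
    -- remaining IH premises
    have hnd1 : (v₁ :: t).Nodup := (List.nodup_cons.mp hnd).2
    have hfreeu1 : Free C₁ u c := by
      intro y hy
      by_cases hyv0 : y = v₀
      · subst hyv0
        rw [hC1v0] at hy
        have : c₀ = c := by injection hy
        exact hcu v₁ (this ▸ hcol0)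
      by_cases hyv1 : y = v₁
      · subst hyv1
        rw [hC1v1] at hy
        exact absurd hy (by simp)
      · rw [heval u y
          (by rintro (⟨-, h⟩ | ⟨h, -⟩); exact hyv0 h; exact hv0u h.symm)
          (by rintro (⟨-, h⟩ | ⟨h, -⟩); exact hyv1 h; exact hv1u h.symm)] at hy
        exact hcu y hy
    have hlast1 :
        (v₀ :: v₁ :: t).getLast (List.cons_ne_nil _ _)
          = (v₁ :: t).getLast (List.cons_ne_nil _ _) :=
      List.getLast_cons (List.cons_ne_nil _ _)
    have hfreel1 : Free C₁ ((v₁ :: t).getLast (List.cons_ne_nil _ _)) c := by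
      set g := (v₁ :: t).getLast (List.cons_ne_nil _ _) with hg
      have hgm : g ∈ v₁ :: t := List.getLast_mem _
      apply free_mono (C := C) _ (by rw [hlast1] at hcl; exact hcl)
      intro y c'' hy
      apply hmono g (hune g (List.mem_cons_of_mem _ hgm)) _ y c'' hy
      intro he
      exact (List.nodup_cons.mp hnd).1 (he ▸ hgm)
    obtain ⟨C'', hsup, hne⟩ := ih v₁ C₁ hfan2 hnd1 hC1v1 c hfreeu1 hfreel1
    refine ⟨C'', ?_, ?_⟩
    · intro x y hxy
      by_cases hp1 : (x = u ∧ y = v₁) ∨ (x = v₁ ∧ y = u)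
      · rcases hp1 with ⟨rfl, rfl⟩ | ⟨rfl, rfl⟩
        · exact hne
        · rw [C''.symm]; exact hne
      · apply hsup
        by_cases hp0 : (x = u ∧ y = v₀) ∨ (x = v₀ ∧ y = u)
        · rcases hp0 with ⟨rfl, rfl⟩ | ⟨rfl, rfl⟩
          · rw [hC1v0]; simp
          · rw [C₁.symm, hC1v0]; simp
        · rw [heval x y hp0 hp1]; exact hxy
    · apply hsup
      rw [hC1v0]; simp

lemma getLast_congr {α : Type*} {l₁ l₂ : List α} (h : l₁ = l₂) (h₁ : l₁ ≠ []) :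
    l₁.getLast h₁ = l₂.getLast (h ▸ h₁) := by subst h; rfl

/-- The key extension step: one uncoloured edge at `u` can be coloured. -/
lemma extend_one [DecidableRel G.Adj] (C : PC G k) (u v₀ : V) (hadj : G.Adj u v₀)
    (h0 : C.f u v₀ = none) (hu : G.degree u < k)
    (hnb : ∀ w, G.Adj u w → G.degree w < k) :
    ∃ C' : PC G k, (∀ x y, C.f x y ≠ none → C'.f x y ≠ none) ∧ C'.f u v₀ ≠ none := by
  obtain ⟨α, hα⟩ := exists_free C u hu
  suffices hrec : ∀ (m : ℕ) (l : List V), IsFan C u (v₀ :: l) → (v₀ :: l).Nodup →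
      Fintype.card V ≤ l.length + m →
      ∃ C' : PC G k, (∀ x y, C.f x y ≠ none → C'.f x y ≠ none) ∧ C'.f u v₀ ≠ none by
    exact hrec (Fintype.card V) [] hadj (List.nodup_singleton _) (by simp)
  intro m
  induction m with
  | zero =>
    intro l hfan hnd hcard
    exfalso
    have h1 := hnd.length_le_card
    simp only [List.length_cons] at h1
    omega
  | succ m ihm =>
    intro l hfan hnd hcard
    have hLne : (v₀ :: l : List V) ≠ [] := List.cons_ne_nil _ _
    set g := (v₀ :: l).getLast hLne with hg
    have hgmem : g ∈ v₀ :: l := List.getLast_mem _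
    have hadjg : G.Adj u g := isFan_adj hfan g hgmem
    obtain ⟨β, hβ⟩ := exists_free C g (hnb g hadjg)
    by_cases hβu : Free C u β
    · exact rotate_done l v₀ C hfan hnd h0 β hβu hβ
    have hwex : ∃ w, C.f u w = some β := by
      unfold Free at hβu; push_neg at hβu; exact hβu
    obtain ⟨w, hw⟩ := hwex
    have hadjw : G.Adj u w := C.adj _ _ _ hw
    have hαβ : α ≠ β := fun he => hβu (he ▸ hα)
    by_cases hwl : w ∈ v₀ :: l
    · -- Kempe chain case
      have hwv0 : w ≠ v₀ := by
        intro he; rw [he, h0] at hw; exact absurd hw (by simp)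
      have hwl' : w ∈ l := by
        rcases List.mem_cons.mp hwl with he | h
        · exact absurd he hwv0
        · exact h
      obtain ⟨l₁, l₂, p, c', heqL, hfreep', hcolw⟩ := isFan_mem_decomp hfan w hwl'
      have hc'β : c' = β := by
        have h1 : some c' = some β := by rw [← hcolw, hw]
        injection h1
      have hfreep : Free C p β := hc'β ▸ hfreep'
      have hune : ∀ z ∈ v₀ :: l, z ≠ u := fun z hz he =>
        G.loopless.irrefl u (he ▸ isFan_adj hfan z hz)
      have hpmem : p ∈ v₀ :: l := by
        rw [heqL]
        refine List.mem_append_left _ ?_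
        exact List.mem_append_right _ (List.mem_singleton_self _)
      have hpu : p ≠ u := hune p hpmem
      have hgu : g ≠ u := hune g hgmem
      -- pendant facts in the Kempe graph
      have hpend_u := kempe_pendant_a (b := β) hα
      have hpend_p := kempe_pendant_b (a := α) hfreep
      have hpend_g := kempe_pendant_b (a := α) hβ
      by_cases hK : (kempe C α β).Reachable u p
      · -- swap at g
        have hgsuffix : g ∈ w :: l₂ := by
          have h2 := List.getLast_append_of_right_ne_nil (l₁ ++ [p]) (w :: l₂) (List.cons_ne_nil _ _)
          have h1 : g = (w :: l₂).getLast (List.cons_ne_nil _ _) := by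
            rw [hg, getLast_congr heqL hLne]
            exact h2
          rw [h1]
          exact List.getLast_mem _
        have hpg : p ≠ g := by
          have hnd' := hnd
          rw [heqL] at hnd'
          have hdisj := (List.nodup_append'.mp hnd').2.2
          intro he
          exact hdisj (List.mem_append_right _ (List.mem_singleton_self _)) (he ▸ hgsuffix)
        have hur : ¬ (kempe C α β).Reachable u g := by
          intro hg'
          exact three_endpoint kempe_two hpend_u hpend_p hpend_g
            (Ne.symm hpu) (Ne.symm hgu) hpg hK hg'
        have hgu_r : ¬ (kempe C α β).Reachable g u := fun h => hur h.symm
        set C₁ := swap C α β hαβ g with hC₁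
        have hfanswap : IsFan C₁ u (v₀ :: l) := by
          apply isFan_of_chain
          · intro z hz; exact isFan_adj hfan z hz
          · intro q hq
            obtain ⟨c, hcf, hcc⟩ := isFan_chain hfan q hq
            have hcα : c ≠ α := fun he => hα q.2 (he ▸ hcc)
            by_cases hcβ : c = β
            · have hq2w : q.2 = w := C.proper u q.2 w c hcc (by rw [hcβ]; exact hw)
              have hq1p : q.1 = p := by
                apply zip_pred_unique hnd (y := w)
                · rw [← hq2w]; exact hq
                · rw [show (v₀ :: l) = (l₁ ++ [p]) ++ w :: l₂ from heqL]
                  exact pair_mem_zip_of_decomp l₁ l₂ p w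
              refine ⟨c, ?_, ?_⟩
              · rw [hq1p, hcβ]
                have hpr : ¬ (kempe C α β).Reachable g p := by
                  intro hr
                  exact hur (hK.trans hr.symm)
                exact swap_free_not_reach hpr hfreep
              · rw [hC₁, swap_f_eq_of_not_reach hgu_r]
                exact hcc
            · refine ⟨c, swap_free_of_ne hcα hcβ hcf, ?_⟩
              rw [hC₁]
              exact (swap_some_iff_of_ne hcα hcβ).mpr hcc
        have h0' : C₁.f u v₀ = none := swap_none_iff.mpr h0
        have hfα1 : Free C₁ u α := swap_free_not_reach hgu_r hα
        have hfg1 : Free C₁ g α := swap_free_reach_b (SimpleGraph.Reachable.refl g) hβ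
        obtain ⟨C', hsup, hne⟩ := rotate_done l v₀ C₁ hfanswap hnd h0' α hfα1 hfg1
        refine ⟨C', ?_, hne⟩
        intro x y hxy
        apply hsup
        intro hnone
        exact hxy (swap_none_iff.mp hnone)
      · -- swap at p
        have hpu_r : ¬ (kempe C α β).Reachable p u := fun h => hK h.symm
        obtain ⟨t, ht⟩ : ∃ t, l₁ ++ [p] = v₀ :: t := by
          cases hl₁ : l₁ with
          | nil =>
            refine ⟨[], ?_⟩
            have : p :: (w :: l₂) = v₀ :: l := by
              rw [heqL, hl₁]; rfl
            have hp : p = v₀ := by injection this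
            simp [hl₁, hp]
          | cons a t' =>
            refine ⟨t' ++ [p], ?_⟩
            have : (a :: (t' ++ [p])) ++ w :: l₂ = v₀ :: l := by
              rw [heqL, hl₁]; simp
            have ha : a = v₀ := by
              have := congrArg (fun z => z.head?) this
              simpa using this
            rw [← ha]; rfl
        have hfanpre : IsFan C u (v₀ :: t) := by
          apply isFan_prefix (l₂ := w :: l₂)
          rw [← ht, ← heqL]
          exact hfan
        have hndpre : (v₀ :: t).Nodup := by
          have hnd' := hnd
          rw [heqL, ht] at hnd'
          exact (List.nodup_append'.mp hnd').1
        have hwnotpre : w ∉ v₀ :: t := by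
          have hnd' := hnd
          rw [heqL, ht] at hnd'
          intro hmem
          exact (List.nodup_append'.mp hnd').2.2 hmem (List.mem_cons_self)
        have hlastpre : (v₀ :: t).getLast (List.cons_ne_nil _ _) = p := by
          have h1 : (l₁ ++ [p]).getLast
              (List.append_ne_nil_of_right_ne_nil _ (List.cons_ne_nil _ _)) = p :=
            List.getLast_append_singleton _
          rw [getLast_congr ht
            (List.append_ne_nil_of_right_ne_nil _ (List.cons_ne_nil _ _))] at h1
          exact h1
        set C₁ := swap C α β hαβ p with hC₁
        have hfanswap : IsFan C₁ u (v₀ :: t) := by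
          apply isFan_of_chain
          · intro z hz; exact isFan_adj hfanpre z hz
          · intro q hq
            obtain ⟨c, hcf, hcc⟩ := isFan_chain hfanpre q hq
            have hcα : c ≠ α := fun he => hα q.2 (he ▸ hcc)
            have hcβ : c ≠ β := by
              intro he
              subst he
              have hq2w : q.2 = w := C.proper u q.2 w _ hcc hw
              have : q.2 ∈ v₀ :: t := by
                have h1 := (List.of_mem_zip hq).2
                exact List.mem_of_mem_tail h1
              rw [hq2w] at this
              exact hwnotpre this
            refine ⟨c, swap_free_of_ne hcα hcβ hcf, ?_⟩
            rw [hC₁]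
            exact (swap_some_iff_of_ne hcα hcβ).mpr hcc
        have h0' : C₁.f u v₀ = none := swap_none_iff.mpr h0
        have hfα1 : Free C₁ u α := swap_free_not_reach hpu_r hα
        have hfp1 : Free C₁ ((v₀ :: t).getLast (List.cons_ne_nil _ _)) α := by
          rw [hlastpre]
          exact swap_free_reach_b (SimpleGraph.Reachable.refl p) hfreep
        obtain ⟨C', hsup, hne⟩ := rotate_done t v₀ C₁ hfanswap hndpre h0' α hfα1 hfp1
        refine ⟨C', ?_, hne⟩
        intro x y hxy
        apply hsup
        intro hnone
        exact hxy (swap_none_iff.mp hnone)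
    · -- extend the fan
      have hfan2 : IsFan C u ((v₀ :: l) ++ [w]) :=
        isFan_append_singleton hLne hfan hβ hw hadjw
      have hfan2' : IsFan C u (v₀ :: (l ++ [w])) := by
        rw [show v₀ :: (l ++ [w]) = (v₀ :: l) ++ [w] from rfl]
        exact hfan2
      have hnd2 : (v₀ :: (l ++ [w])).Nodup := by
        rw [show v₀ :: (l ++ [w]) = (v₀ :: l) ++ [w] from rfl]
        rw [List.nodup_append']
        exact ⟨hnd, List.nodup_singleton _, by
          intro z hz hzw
          rw [List.mem_singleton.mp hzw] at hz
          exact hwl hz⟩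
      apply ihm (l ++ [w]) hfan2' hnd2
      rw [List.length_append, List.length_singleton]
      omega

/-- A total proper partial colouring gives an edge colouring. -/
lemma edgeColorable_of_total (C : PC G k)
    (htot : ∀ x y, G.Adj x y → C.f x y ≠ none) :
    ∃ c : G.edgeSet → Fin k, ∀ e f : G.edgeSet, e ≠ f →
      (∃ v : V, v ∈ (e : Sym2 V) ∧ v ∈ (f : Sym2 V)) → c e ≠ c f := by
  have hsome : ∀ e : G.edgeSet, (Sym2.lift ⟨C.f, C.symm⟩ (e : Sym2 V)).isSome := by
    rintro ⟨e, he⟩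
    induction e with
    | _ x y =>
      rw [Sym2.lift_mk]
      exact Option.isSome_iff_ne_none.mpr (htot x y (G.mem_edgeSet.mp he))
  refine ⟨fun e => (Sym2.lift ⟨C.f, C.symm⟩ (e : Sym2 V)).get (hsome e), ?_⟩
  rintro e f hef ⟨v, hve, hvf⟩ hcc
  obtain ⟨a, hea⟩ := Sym2.mem_iff_exists.mp hve
  obtain ⟨b, hfb⟩ := Sym2.mem_iff_exists.mp hvf
  have hsome_e := hsome e
  have hsome_f := hsome f
  have h1 : Sym2.lift ⟨C.f, C.symm⟩ (e : Sym2 V) = Sym2.lift ⟨C.f, C.symm⟩ (f : Sym2 V) := by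
    have hcc' : (Sym2.lift ⟨C.f, C.symm⟩ (e : Sym2 V)).get hsome_e
        = (Sym2.lift ⟨C.f, C.symm⟩ (f : Sym2 V)).get hsome_f := hcc
    rw [← Option.some_get hsome_e, ← Option.some_get hsome_f, hcc']
  rw [hea, hfb, Sym2.lift_mk, Sym2.lift_mk] at h1
  have h1' : C.f v a = C.f v b := h1
  have hab : a = b := by
    cases hfa : C.f v a with
    | none =>
      exfalso
      apply htot v a _ hfa
      rw [← G.mem_edgeSet, ← hea]
      exact e.2
    | some d =>
      have h2 : C.f v b = some d := by rw [← h1', hfa]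
      exact C.proper v a b d hfa h2
  apply hef
  apply Subtype.ext
  rw [hea, hfb, hab]

/-- The main induction: colour the uncoloured edges at `u` one by one. -/
lemma total_extension [DecidableRel G.Adj] (u : V) (hu : G.degree u < k)
    (hnb : ∀ w, G.Adj u w → G.degree w < k) :
    ∀ (n : ℕ) (C : PC G k), (∀ x y, G.Adj x y → C.f x y = none → x = u ∨ y = u) →
      ((G.neighborFinset u).filter (fun z => C.f u z = none)).card ≤ n →
      ∃ c : G.edgeSet → Fin k, ∀ e f : G.edgeSet, e ≠ f →
        (∃ v : V, v ∈ (e : Sym2 V) ∧ v ∈ (f : Sym2 V)) → c e ≠ c f := by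
  intro n
  induction n with
  | zero =>
    intro C hP hcount
    apply edgeColorable_of_total C
    intro x y hxy hnone
    have hempty : ∀ z, G.Adj u z → C.f u z ≠ none := by
      intro z hz hno
      have hmem : z ∈ (G.neighborFinset u).filter (fun z => C.f u z = none) := by
        rw [Finset.mem_filter]
        exact ⟨(G.mem_neighborFinset u z).mpr hz, hno⟩
      have h0 : ((G.neighborFinset u).filter (fun z => C.f u z = none)).card = 0 :=
        Nat.le_zero.mp hcount
      rw [Finset.card_eq_zero] at h0
      rw [h0] at hmem
      exact absurd hmem (Finset.notMem_empty z)
    rcases hP x y hxy hnone with rfl | rfl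
    · exact hempty y hxy hnone
    · exact hempty x hxy.symm (by rw [C.symm]; exact hnone)
  | succ n ih =>
    intro C hP hcount
    by_cases hex : ∃ z, G.Adj u z ∧ C.f u z = none
    · obtain ⟨z, hz1, hz2⟩ := hex
      obtain ⟨C', hsup, hne⟩ := extend_one C u z hz1 hz2 hu hnb
      apply ih C'
      · intro x y hxy hnone
        apply hP x y hxy
        by_contra h
        exact (hsup x y h) hnone
      · have hsubset : (G.neighborFinset u).filter (fun w => C'.f u w = none) ⊆
            ((G.neighborFinset u).filter (fun w => C.f u w = none)).erase z := by
          intro w hw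
          rw [Finset.mem_filter] at hw
          rw [Finset.mem_erase, Finset.mem_filter]
          refine ⟨?_, hw.1, ?_⟩
          · intro he
            rw [he] at hw
            exact hne hw.2
          · by_contra hc
            exact (hsup u w hc) hw.2
        have h1 := Finset.card_le_card hsubset
        have h2 : z ∈ (G.neighborFinset u).filter (fun w => C.f u w = none) := by
          rw [Finset.mem_filter]
          exact ⟨(G.mem_neighborFinset u z).mpr hz1, hz2⟩
        have h3 := Finset.card_erase_of_mem h2
        omega
    · apply edgeColorable_of_total C
      intro x y hxy hnone
      rcases hP x y hxy hnone with rfl | rfl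
      · exact hex ⟨y, hxy, hnone⟩
      · exact hex ⟨x, hxy.symm, by rw [C.symm]; exact hnone⟩

end VizingExt

/-- If u lies outside X ∪ N(X) (X the set of maximum-degree vertices) and Δ ≤ k,
then a k-edge colouring of G - u extends to one of G. -/
theorem edgeColorable_of_deleteVertex {V : Type*} [Fintype V] [DecidableEq V]
    (G : SimpleGraph V) [DecidableRel G.Adj] (k : ℕ) (hΔ : G.maxDegree ≤ k) (u : V)
    (hu : u ∉ ({v : V | G.degree v = G.maxDegree} ∪
      {v : V | ∃ w, G.degree w = G.maxDegree ∧ G.Adj w v}))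
    (h : EdgeColorable (G.induce ({u}ᶜ : Set V)) k) :
    EdgeColorable G k := by
  classical
  rw [Set.mem_union] at hu
  push_neg at hu
  obtain ⟨hu1, hu2⟩ := hu
  rw [Set.mem_setOf_eq] at hu1
  rw [Set.mem_setOf_eq] at hu2
  push_neg at hu2
  have hdu : G.degree u < k :=
    lt_of_lt_of_le (lt_of_le_of_ne (G.degree_le_maxDegree u) hu1) hΔ
  have hnb : ∀ w, G.Adj u w → G.degree w < k := by
    intro w hw
    have h1 : G.degree w ≠ G.maxDegree := fun he => hu2 w he hw.symm
    exact lt_of_lt_of_le (lt_of_le_of_ne (G.degree_le_maxDegree w) h1) hΔ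
  obtain ⟨c₀, hc₀⟩ := h
  have hmem : ∀ {x : V}, x ≠ u → x ∈ ({u}ᶜ : Set V) := fun hx =>
    Set.mem_compl_singleton_iff.mpr hx
  have hedge : ∀ {x y : V} (h : G.Adj x y ∧ x ≠ u ∧ y ≠ u),
      s((⟨x, hmem h.2.1⟩ : ({u}ᶜ : Set V)), (⟨y, hmem h.2.2⟩ : ({u}ᶜ : Set V))) ∈
        (G.induce ({u}ᶜ : Set V)).edgeSet := by
    intro x y h
    rw [SimpleGraph.mem_edgeSet]
    exact h.1
  set C₀ : VizingExt.PC G k :=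
    { f := fun x y =>
        if h : G.Adj x y ∧ x ≠ u ∧ y ≠ u then some (c₀ ⟨_, hedge h⟩) else none
      symm := by
        intro x y
        by_cases h1 : G.Adj x y ∧ x ≠ u ∧ y ≠ u
        · have h2 : G.Adj y x ∧ y ≠ u ∧ x ≠ u := ⟨h1.1.symm, h1.2.2, h1.2.1⟩
          rw [dif_pos h1, dif_pos h2]
          congr 1
          apply congrArg c₀
          apply Subtype.ext
          exact Sym2.eq_swap
        · have h2 : ¬ (G.Adj y x ∧ y ≠ u ∧ x ≠ u) := fun hh =>
            h1 ⟨hh.1.symm, hh.2.2, hh.2.1⟩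
          rw [dif_neg h1, dif_neg h2]
      adj := by
        intro x y c hxy
        split_ifs at hxy with h1
        exact h1.1
      proper := by
        intro x y z c h1 h2
        split_ifs at h1 h2 with hc1 hc2
        by_contra hyz
        have hinj1 : c₀ ⟨_, hedge hc1⟩ = c := by injection h1
        have hinj2 : c₀ ⟨_, hedge hc2⟩ = c := by injection h2
        have hne : (⟨_, hedge hc1⟩ : (G.induce ({u}ᶜ : Set V)).edgeSet) ≠ ⟨_, hedge hc2⟩ := by
          intro he
          have hval := congrArg Subtype.val he
          dsimp at hval
          rw [Sym2.congr_right] at hval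
          exact hyz (congrArg Subtype.val hval)
        have hshare : ∃ v, v ∈ ((⟨_, hedge hc1⟩ : (G.induce ({u}ᶜ : Set V)).edgeSet) :
            Sym2 ({u}ᶜ : Set V)) ∧ v ∈ ((⟨_, hedge hc2⟩ :
            (G.induce ({u}ᶜ : Set V)).edgeSet) : Sym2 ({u}ᶜ : Set V)) :=
          ⟨⟨x, hmem hc1.2.1⟩, Sym2.mem_mk_left _ _, Sym2.mem_mk_left _ _⟩
        exact hc₀ _ _ hne hshare (by rw [hinj1, hinj2])
    } with hC₀
  have hP : ∀ x y, G.Adj x y → C₀.f x y = none → x = u ∨ y = u := by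
    intro x y hxy hnone
    by_contra hc
    push_neg at hc
    have h1 : G.Adj x y ∧ x ≠ u ∧ y ≠ u := ⟨hxy, hc.1, hc.2⟩
    rw [hC₀] at hnone
    dsimp only at hnone
    rw [dif_pos h1] at hnone
    exact absurd hnone (by simp)
  exact VizingExt.total_extension u hdu hnb
    ((G.neighborFinset u).filter (fun z => C₀.f u z = none)).card C₀ hP le_rfl
end

section
/- Let G be a simple graph, u a vertex of G with degree at most k−1, and suppose every neighbour of u has degree at most k−1 in G. If G − u admits a proper k-edge colouring, then G admits a proper k-edge colouring. -/
open SimpleGraph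

set_option linter.unusedSectionVars false

set_option maxHeartbeats 1000000

namespace VizingAux

attribute [local instance 0] Classical.propDecidable

variable {V : Type*} [DecidableEq V] {k : ℕ} {G : SimpleGraph V}

/-- A partial proper `k`-edge colouring of `G`. -/
structure PC (G : SimpleGraph V) (k : ℕ) where
  c : V → V → Option (Fin k)
  symm : ∀ x y, c x y = c y x
  supp : ∀ ⦃x y a⦄, c x y = some a → G.Adj x y
  proper : ∀ ⦃x y z a⦄, c x y = some a → c x z = some a → y = z

/-- Colour `a` does not appear on any edge at `x`. -/
def PC.missing (P : PC G k) (x : V) (a : Fin k) : Prop := ∀ y, P.c x y ≠ some a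

lemma PC.not_missing_iff (P : PC G k) (x : V) (a : Fin k) :
    ¬ P.missing x a ↔ ∃ y, P.c x y = some a := by
  unfold PC.missing; push_neg; rfl

lemma PC.c_self (P : PC G k) (x : V) : P.c x x = none := by
  cases h : P.c x x with
  | none => rfl
  | some a => exact absurd (P.supp h) (G.irrefl)

/-- Uncolour the edge `{u,v}`. -/
def PC.erase (P : PC G k) (u v : V) : PC G k where
  c x y := if (x = u ∧ y = v) ∨ (x = v ∧ y = u) then none else P.c x y
  symm x y := by rw [P.symm x y]; exact if_congr (by tauto) rfl rfl
  supp x y a h := by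
    split at h
    · exact absurd h (by simp)
    · exact P.supp h
  proper x y z a h1 h2 := by
    split at h1
    · exact absurd h1 (by simp)
    split at h2
    · exact absurd h2 (by simp)
    exact P.proper h1 h2

lemma PC.erase_c (P : PC G k) (u v x y : V) :
    (P.erase u v).c x y =
      if (x = u ∧ y = v) ∨ (x = v ∧ y = u) then none else P.c x y := rfl

/-- Colour the edge `{u,v}` with colour `a`, assuming `a` is missing at both ends. -/
def PC.extend (P : PC G k) (u v : V) (a : Fin k) (hadj : G.Adj u v)
    (hu : P.missing u a) (hv : P.missing v a) : PC G k where
  c x y := if (x = u ∧ y = v) ∨ (x = v ∧ y = u) then some a else P.c x y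
  symm x y := by rw [P.symm x y]; exact if_congr (by tauto) rfl rfl
  supp x y b h := by
    split at h
    · rcases ‹_ ∨ _› with ⟨rfl, rfl⟩ | ⟨rfl, rfl⟩
      · exact hadj
      · exact hadj.symm
    · exact P.supp h
  proper x y z b h1 h2 := by
    have hne : u ≠ v := hadj.ne
    by_cases H1 : (x = u ∧ y = v) ∨ (x = v ∧ y = u)
    · rw [if_pos H1] at h1
      obtain rfl : b = a := (Option.some.inj h1).symm
      by_cases H2 : (x = u ∧ z = v) ∨ (x = v ∧ z = u)
      · rcases H1 with ⟨hxu, hyv⟩ | ⟨hxv, hyu⟩ <;>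
          rcases H2 with ⟨hxu2, hzv⟩ | ⟨hxv2, hzu⟩
        · rw [hyv, hzv]
        · exact absurd (hxu.symm.trans hxv2) hne
        · exact absurd (hxu2.symm.trans hxv) hne
        · rw [hyu, hzu]
      · rw [if_neg H2] at h2
        rcases H1 with ⟨hxu, hyv⟩ | ⟨hxv, hyu⟩
        · subst hxu; exact absurd h2 (hu z)
        · subst hxv; exact absurd h2 (hv z)
    · rw [if_neg H1] at h1
      by_cases H2 : (x = u ∧ z = v) ∨ (x = v ∧ z = u)
      · rw [if_pos H2] at h2
        obtain rfl : b = a := (Option.some.inj h2).symm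
        rcases H2 with ⟨hxu, _⟩ | ⟨hxv, _⟩
        · subst hxu; exact absurd h1 (hu y)
        · subst hxv; exact absurd h1 (hv y)
      · rw [if_neg H2] at h2
        exact P.proper h1 h2

lemma PC.extend_c (P : PC G k) (u v : V) (a : Fin k) (hadj : G.Adj u v)
    (hu : P.missing u a) (hv : P.missing v a) (x y : V) :
    (P.extend u v a hadj hu hv).c x y =
      if (x = u ∧ y = v) ∨ (x = v ∧ y = u) then some a else P.c x y := rfl


def swapCol (α β a : Fin k) : Fin k := if a = α then β else if a = β then α else a

lemma swapCol_alpha (α β : Fin k) : swapCol α β α = β := by unfold swapCol; rw [if_pos rfl]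

lemma swapCol_beta (α β : Fin k) : swapCol α β β = α := by
  unfold swapCol; split
  · rename_i h; rw [h]
  · rw [if_pos rfl]

lemma swapCol_other {α β a : Fin k} (h1 : a ≠ α) (h2 : a ≠ β) : swapCol α β a = a := by
  unfold swapCol; rw [if_neg h1, if_neg h2]

def swapVal (α β : Fin k) (o : Option (Fin k)) : Option (Fin k) :=
  if o = some α then some β else if o = some β then some α else o

lemma swapVal_eq_some_iff {α β a : Fin k} {o : Option (Fin k)} :
    swapVal α β o = some a ↔ o = some (swapCol α β a) := by
  unfold swapVal swapCol
  split_ifs with h1 h2 h3 h4 h5 h6 <;> subst_vars <;> simp_all <;> grind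

lemma swapVal_eq_none_iff {α β : Fin k} {o : Option (Fin k)} :
    swapVal α β o = none ↔ o = none := by
  unfold swapVal
  split_ifs <;> simp_all

def Closed (P : PC G k) (α β : Fin k) (S : Set V) : Prop :=
  ∀ ⦃x y⦄, x ∈ S → (P.c x y = some α ∨ P.c x y = some β) → y ∈ S

private noncomputable def swapFun (P : PC G k) (α β : Fin k) (S : Set V) :
    V → V → Option (Fin k) :=
  fun x y => if x ∈ S ∨ y ∈ S then swapVal α β (P.c x y) else P.c x y

lemma swapFun_eq (P : PC G k) {α β : Fin k} {S : Set V} (hS : Closed P α β S) (x y : V) :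
    swapFun P α β S x y =
      if x ∈ S then swapVal α β (P.c x y) else P.c x y := by
  unfold swapFun
  by_cases h1 : x ∈ S
  · rw [if_pos (Or.inl h1), if_pos h1]
  · rw [if_neg h1]
    by_cases h2 : y ∈ S
    · rw [if_pos (Or.inr h2)]
      unfold swapVal
      rw [if_neg, if_neg] <;> intro hc <;> refine h1 (hS h2 ?_) <;> rw [P.symm y x]
      · exact Or.inr hc
      · exact Or.inl hc
    · rw [if_neg (by tauto)]

/-- Swap the colours `α` and `β` on a set `S` closed under `α`-`β` edges. -/
noncomputable def PC.swap (P : PC G k) (α β : Fin k) (S : Set V) (hS : Closed P α β S) :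
    PC G k where
  c := swapFun P α β S
  symm x y := by unfold swapFun; rw [P.symm x y]; exact if_congr (by tauto) rfl rfl
  supp x y a h := by
    rw [swapFun_eq P hS] at h
    split at h
    · exact P.supp (swapVal_eq_some_iff.1 h)
    · exact P.supp h
  proper x y z a h1 h2 := by
    rw [swapFun_eq P hS] at h1 h2
    by_cases h : x ∈ S
    · rw [if_pos h] at h1 h2
      exact P.proper (swapVal_eq_some_iff.1 h1) (swapVal_eq_some_iff.1 h2)
    · rw [if_neg h] at h1 h2
      exact P.proper h1 h2

lemma PC.swap_c (P : PC G k) {α β : Fin k} {S : Set V} (hS : Closed P α β S) (x y : V) :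
    (P.swap α β S hS).c x y = if x ∈ S then swapVal α β (P.c x y) else P.c x y :=
  swapFun_eq P hS x y

lemma PC.swap_c_of_not_mem (P : PC G k) {α β : Fin k} {S : Set V} (hS : Closed P α β S)
    {x : V} (hx : x ∉ S) (y : V) : (P.swap α β S hS).c x y = P.c x y := by
  rw [P.swap_c hS, if_neg hx]

lemma PC.swap_c_eq_none_iff (P : PC G k) {α β : Fin k} {S : Set V} (hS : Closed P α β S)
    (x y : V) : (P.swap α β S hS).c x y = none ↔ P.c x y = none := by
  rw [P.swap_c hS]
  split
  · exact swapVal_eq_none_iff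
  · exact Iff.rfl

lemma PC.swap_missing_of_not_mem (P : PC G k) {α β : Fin k} {S : Set V} (hS : Closed P α β S)
    {x : V} (hx : x ∉ S) (a : Fin k) : (P.swap α β S hS).missing x a ↔ P.missing x a := by
  unfold PC.missing
  constructor <;> intro h y <;> have hy := h y <;>
    rw [P.swap_c_of_not_mem hS hx] at * <;> exact hy

lemma PC.swap_missing_of_mem (P : PC G k) {α β : Fin k} {S : Set V} (hS : Closed P α β S)
    {x : V} (hx : x ∈ S) (a : Fin k) :
    ((P.swap α β S hS).missing x a ↔ P.missing x (swapCol α β a)) := by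
  unfold PC.missing
  constructor <;> intro h y <;> have hy := h y <;> rw [P.swap_c hS, if_pos hx] at * <;>
    intro hc <;> apply hy
  · exact swapVal_eq_some_iff.2 hc
  · exact swapVal_eq_some_iff.1 hc

lemma PC.swap_missing_alpha (P : PC G k) {α β : Fin k} {S : Set V} (hS : Closed P α β S)
    {x : V} (hx : x ∈ S) : ((P.swap α β S hS).missing x α ↔ P.missing x β) := by
  rw [P.swap_missing_of_mem hS hx, swapCol_alpha]

lemma PC.swap_missing_other (P : PC G k) {α β : Fin k} {S : Set V} (hS : Closed P α β S)
    {a : Fin k} (ha1 : a ≠ α) (ha2 : a ≠ β) (x : V) :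
    ((P.swap α β S hS).missing x a ↔ P.missing x a) := by
  by_cases hx : x ∈ S
  · rw [P.swap_missing_of_mem hS hx, swapCol_other ha1 ha2]
  · exact P.swap_missing_of_not_mem hS hx a


section Missing

variable [Fintype V] [DecidableRel G.Adj]

/-- If the degree of `x` is less than `k`, some colour is missing at `x`. -/
lemma PC.exists_missing (P : PC G k) (x : V) (hx : G.degree x < k) :
    ∃ a : Fin k, P.missing x a := by
  by_contra hcon
  push_neg at hcon
  have hch : ∀ a : Fin k, ∃ y, P.c x y = some a := by
    intro a
    have := hcon a
    rw [P.not_missing_iff] at this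
    exact this
  choose f hf using hch
  have hinj : Function.Injective f := by
    intro a b hab
    exact Option.some.inj ((hf a).symm.trans (by rw [hab]; exact hf b))
  have hmem : ∀ a, f a ∈ G.neighborFinset x := by
    intro a
    rw [SimpleGraph.mem_neighborFinset]
    exact P.supp (hf a)
  have : Fintype.card (Fin k) ≤ G.degree x := by
    rw [← SimpleGraph.card_neighborFinset_eq_degree]
    exact Finset.card_le_card_of_injOn f (fun a _ => hmem a) (Function.Injective.injOn hinj)
  simp only [Fintype.card_fin] at this
  omega

end Missing

section ThreeEndpoints

variable {K : SimpleGraph V}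

/-- "Degree at most one" at a vertex. -/
def Defic (K : SimpleGraph V) (x : V) : Prop := ∀ ⦃y z⦄, K.Adj x y → K.Adj x z → y = z

lemma list_closure
    (hdeg : ∀ ⦃x y₁ y₂ y₃ : V⦄, K.Adj x y₁ → K.Adj x y₂ → K.Adj x y₃ → y₁ = y₂ ∨ y₁ = y₃ ∨ y₂ = y₃)
    {L : List V} (hC : L.Chain' K.Adj) (hN : L.Nodup) (hne : L ≠ [])
    (hhead : Defic K (L.head hne)) (hlast : Defic K (L.getLast hne)) (hx2 : 2 ≤ L.length) :
    (∀ w ∈ L, ∀ v, K.Adj w v → v ∈ L) ∧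
    (∀ w ∈ L, Defic K w → w = L.head hne ∨ w = L.getLast hne) := by
  have hlenpos : 0 < L.length := List.length_pos_iff.2 hne
  have hhead' : L.head hne = L[0] := List.head_eq_getElem_zero hne
  have hlast' : L.getLast hne = L[L.length - 1] := List.getLast_eq_getElem hne
  simp only [List.Chain', List.isChain_iff_getElem] at hC
  have hchain : ∀ (i : ℕ) (h : i + 1 < L.length), K.Adj L[i] L[i+1] := by
    intro i h
    have := hC i (by omega)
    simpa using this
  have hget_inj : ∀ (i j : ℕ) (hi : i < L.length) (hj : j < L.length),
      L[i] = L[j] → i = j := by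
    intro i j hi hj hij
    have : (⟨i, hi⟩ : Fin L.length) = ⟨j, hj⟩ := (List.Nodup.get_inj_iff hN).1 (by simpa using hij)
    exact congrArg Fin.val this
  constructor
  · intro w hw v hadj
    obtain ⟨i, hi, hiw⟩ := List.mem_iff_getElem.1 hw
    subst hiw
    by_cases h0 : i = 0
    · subst h0
      have h1 : 0 + 1 < L.length := by omega
      have : v = L[0+1] := hhead (hhead' ▸ hadj) (hhead' ▸ hchain 0 h1)
      subst this; exact List.getElem_mem _
    · by_cases hl : i = L.length - 1
      · subst hl
        have h1 : (L.length - 1 - 1) + 1 < L.length := by omega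
        have h2 : (L.length - 1 - 1) + 1 = L.length - 1 := by omega
        have hadj2 : K.Adj L[L.length - 1] L[L.length - 1 - 1] := by
          have := (hchain (L.length - 1 - 1) h1).symm
          convert this using 2
          omega
        have : v = L[L.length - 1 - 1] := hlast (hlast' ▸ hadj) (hlast' ▸ hadj2)
        subst this; exact List.getElem_mem _
      · have hi1 : i + 1 < L.length := by omega
        have hi0 : i - 1 + 1 < L.length := by omega
        have hadjp : K.Adj L[i] L[i-1] := by
          have := (hchain (i-1) hi0).symm
          convert this using 2
          omega
        have hadjn : K.Adj L[i] L[i+1] := hchain i hi1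
        rcases hdeg hadj hadjp hadjn with h | h | h
        · subst h; exact List.getElem_mem _
        · subst h; exact List.getElem_mem _
        · exfalso
          have := hget_inj (i-1) (i+1) (by omega) hi1 h
          omega
  · intro w hw hdef
    obtain ⟨i, hi, hiw⟩ := List.mem_iff_getElem.1 hw
    subst hiw
    by_cases h0 : i = 0
    · subst h0; left; rw [hhead']
    · by_cases hl : i = L.length - 1
      · subst hl; right; rw [hlast']
      · exfalso
        have hi1 : i + 1 < L.length := by omega
        have hi0 : i - 1 + 1 < L.length := by omega
        have hadjp : K.Adj L[i] L[i-1] := by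
          have := (hchain (i-1) hi0).symm
          convert this using 2
          omega
        have hadjn : K.Adj L[i] L[i+1] := hchain i hi1
        have := hdef hadjp hadjn
        have := hget_inj (i-1) (i+1) (by omega) hi1 this
        omega

/-- Three distinct vertices of degree ≤ 1 cannot be mutually reachable in a graph of
maximum degree ≤ 2. -/
lemma three_endpoint
    (hdeg : ∀ ⦃x y₁ y₂ y₃ : V⦄, K.Adj x y₁ → K.Adj x y₂ → K.Adj x y₃ → y₁ = y₂ ∨ y₁ = y₃ ∨ y₂ = y₃)
    {u p t : V} (hu : Defic K u) (hp : Defic K p) (ht : Defic K t)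
    (hup : u ≠ p) (hut : u ≠ t) (hpt : p ≠ t)
    (h1 : K.Reachable p u) (h2 : K.Reachable p t) : False := by
  obtain ⟨w1⟩ := h1
  let P := w1.toPath
  have hC : (P : K.Walk p u).support.Chain' K.Adj := SimpleGraph.Walk.isChain_adj_support _
  have hN : (P : K.Walk p u).support.Nodup := P.2.support_nodup
  have hne : (P : K.Walk p u).support ≠ [] := SimpleGraph.Walk.support_ne_nil _
  have hhd : (P : K.Walk p u).support.head hne = p := SimpleGraph.Walk.head_support _
  have hlst : (P : K.Walk p u).support.getLast hne = u := SimpleGraph.Walk.getLast_support _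
  have hlen : 2 ≤ (P : K.Walk p u).support.length := by
    by_contra hcon
    push_neg at hcon
    interval_cases hl : (P : K.Walk p u).support.length
    · exact hne (List.length_eq_zero_iff.1 hl)
    · obtain ⟨a, ha⟩ := List.length_eq_one_iff.1 hl
      have h1 : p ∈ (P : K.Walk p u).support := SimpleGraph.Walk.start_mem_support _
      have h2 : u ∈ (P : K.Walk p u).support := SimpleGraph.Walk.end_mem_support _
      rw [ha, List.mem_singleton] at h1 h2
      exact hup (h2.trans h1.symm)
  obtain ⟨hclosed, hends⟩ := list_closure hdeg hC hN hne (hhd.symm ▸ hp) (hlst.symm ▸ hu) hlen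
  -- t is reachable from p, so it lies in the support
  have hT : ∀ {x y : V} (w : K.Walk x y), x ∈ (P : K.Walk p u).support →
      y ∈ (P : K.Walk p u).support := by
    intro x y w
    induction w with
    | nil => exact id
    | cons hadj w ih => exact fun hx => ih (hclosed _ hx _ hadj)
  obtain ⟨w2⟩ := h2
  have hmem : t ∈ (P : K.Walk p u).support := hT w2 (SimpleGraph.Walk.start_mem_support _)
  rcases hends t hmem ht with h | h
  · exact hpt (h ▸ hhd).symm
  · exact hut (h ▸ hlst).symm

end ThreeEndpoints


section Rotate

/-- Rotating a fan `L` around `u`: the colour of `u-L[i+1]` moves to `u-L[i]`, leaving the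
last edge uncoloured, and not changing the set of colours present at `u`. -/
lemma rotate (u : V) : ∀ (L : List V) (P : PC G k) (hne : L ≠ []),
    (∀ w ∈ L, G.Adj u w) → L.Nodup → u ∉ L →
    P.c u (L.head hne) = none →
    L.Chain' (fun a b => ∃ γ, P.c u b = some γ ∧ P.missing a γ) →
    ∃ P' : PC G k,
      (∀ a, P'.missing u a ↔ P.missing u a) ∧
      P'.c u (L.getLast hne) = none ∧
      (∀ x y, x ≠ u → y ≠ u → P'.c x y = P.c x y) ∧
      (∀ y, y ∉ L → P'.c u y = P.c u y) ∧
      (∀ x y, P'.c x y = none →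
        P.c x y = none ∨ (x = u ∧ y = L.getLast hne) ∨ (y = u ∧ x = L.getLast hne)) ∧
      (∀ y ∈ L, y ≠ L.getLast hne → P'.c u y ≠ none) := by
  intro L
  induction L with
  | nil => intro P hne; exact absurd rfl hne
  | cons v₀ L ih =>
    intro P hne hadj hnd hu h0 hch
    rcases L with _ | ⟨w, L'⟩
    · -- singleton fan: nothing to do
      refine ⟨P, fun a => Iff.rfl, h0, fun _ _ _ _ => rfl, fun _ _ => rfl,
        fun x y h => Or.inl h, ?_⟩
      intro y hy hyne
      simp only [List.mem_singleton] at hy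
      exact absurd (hy.trans (List.getLast_singleton _).symm) hyne
    · set l := w :: L' with hl
      simp only [List.Chain'] at hch; rw [List.isChain_cons_cons] at hch
      obtain ⟨⟨γ, hγ1, hγ2⟩, hch'⟩ := hch
      have huv₀ : u ≠ v₀ := fun h => hu (h ▸ List.mem_cons_self)
      have h0' : P.c u v₀ = none := h0
      have huw : u ≠ w := fun h => hu (by rw [h]; simp [hl])
      have hv₀w : v₀ ≠ w := by
        intro h
        rw [List.nodup_cons] at hnd
        exact hnd.1 (by rw [h]; simp [hl])
      have hadjv₀ : G.Adj u v₀ := hadj v₀ (List.mem_cons_self)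
      have hmissu : (P.erase u w).missing u γ := by
        intro y hy
        rw [PC.erase_c] at hy
        split at hy
        · exact absurd hy (by simp)
        · rename_i hcond
          exact hcond (Or.inl ⟨rfl, P.proper hy hγ1⟩)
      have hmissv : (P.erase u w).missing v₀ γ := by
        intro y hy
        rw [PC.erase_c] at hy
        split at hy
        · exact absurd hy (by simp)
        · exact hγ2 y hy
      set P₁ := (P.erase u w).extend u v₀ γ hadjv₀ hmissu hmissv with hP₁def
      have hP₁ : ∀ x y, P₁.c x y =
          if (x = u ∧ y = v₀) ∨ (x = v₀ ∧ y = u) then some γ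
          else if (x = u ∧ y = w) ∨ (x = w ∧ y = u) then none
          else P.c x y := fun x y => rfl
      -- the colours present at u are unchanged
      have hmu : ∀ a, P₁.missing u a ↔ P.missing u a := by
        intro a
        constructor
        · intro h y hy
          by_cases hyw : y = w
          · subst hyw
            obtain rfl : a = γ := by rw [hγ1] at hy; exact (Option.some.inj hy).symm
            exact h v₀ (by rw [hP₁]; rw [if_pos (Or.inl ⟨rfl, rfl⟩)])
          · by_cases hyv : y = v₀
            · subst hyv; rw [h0'] at hy; exact absurd hy (by simp)
            · refine h y ?_
              rw [hP₁, if_neg (by tauto), if_neg (by tauto)]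
              exact hy
        · intro h y hy
          rw [hP₁] at hy
          split at hy
          · obtain rfl : a = γ := (Option.some.inj hy).symm
            exact h w hγ1
          · split at hy
            · exact absurd hy (by simp)
            · exact h y hy
      have hnd' : (v₀ :: l).Nodup := hnd
      have hlne : l ≠ [] := by simp [hl]
      -- apply the induction hypothesis to the shifted colouring and the tail
      obtain ⟨P₂, ih1, ih2, ih3, ih4, ih5, ih6⟩ := ih P₁ hlne
        (fun x hx => hadj x (List.mem_cons_of_mem _ hx))
        ((List.nodup_cons.1 hnd).2)
        (fun hx => hu (List.mem_cons_of_mem _ hx))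
        (by
          show P₁.c u w = none
          rw [hP₁, if_neg (by tauto), if_pos (Or.inl ⟨rfl, rfl⟩)])
        (by
          -- chain transfer from P to P₁
          simp only [List.Chain', List.isChain_iff_getElem] at hch' ⊢
          intro i hi
          obtain ⟨γ', hg1, hg2⟩ := hch' i hi
          have hbmem : l.get ⟨i+1, by omega⟩ ∈ l := List.get_mem _ _
          have hamem : l.get ⟨i, by omega⟩ ∈ l := List.get_mem _ _
          have hbne_w : l.get ⟨i+1, by omega⟩ ≠ w := by
            intro h
            have hw0 : l.get ⟨0, by simp [hl]⟩ = w := rfl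
            have h2 : l.get ⟨i+1, by omega⟩ = l.get ⟨0, by simp [hl]⟩ := h.trans hw0.symm
            have h3 := (List.Nodup.get_inj_iff (List.nodup_cons.1 hnd).2).1 h2
            exact absurd (congrArg Fin.val h3) (by simp)
          have hbu : l.get ⟨i+1, by omega⟩ ≠ u := fun h =>
            hu (List.mem_cons_of_mem _ (h ▸ hbmem))
          have hbv₀ : l.get ⟨i+1, by omega⟩ ≠ v₀ := by
            intro h
            exact (List.nodup_cons.1 hnd).1 (h ▸ hbmem)
          have hau : l.get ⟨i, by omega⟩ ≠ u := fun h =>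
            hu (List.mem_cons_of_mem _ (h ▸ hamem))
          have hav₀ : l.get ⟨i, by omega⟩ ≠ v₀ := by
            intro h
            exact (List.nodup_cons.1 hnd).1 (h ▸ hamem)
          refine ⟨γ', ?_, ?_⟩
          · rw [hP₁, if_neg (by tauto), if_neg (by tauto)]
            exact hg1
          · intro y hy
            rw [hP₁] at hy
            split at hy
            · rename_i hcond
              rcases hcond with ⟨h1, h2⟩ | ⟨h1, h2⟩
              · exact hau h1
              · exact hav₀ h1
            · split at hy
              · exact absurd hy (by simp)
              · exact hg2 y hy)
      have hlast : (v₀ :: l).getLast hne = l.getLast hlne := List.getLast_cons hlne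
      refine ⟨P₂, ?_, ?_, ?_, ?_, ?_, ?_⟩
      · intro a; rw [ih1 a, hmu a]
      · rw [hlast]; exact ih2
      · intro x y hx hy
        rw [ih3 x y hx hy, hP₁, if_neg (by tauto), if_neg (by tauto)]
      · intro y hy
        have hyl : y ∉ l := fun h => hy (List.mem_cons_of_mem _ h)
        have hyv₀ : y ≠ v₀ := fun h => hy (h ▸ List.mem_cons_self)
        have hyw : y ≠ w := fun h => hyl (by rw [h]; simp [hl])
        rw [ih4 y hyl, hP₁, if_neg (by tauto), if_neg (by tauto)]
      · intro x y hxy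
        rcases ih5 x y hxy with h | h | h
        · rw [hP₁] at h
          split at h
          · exact absurd h (by simp)
          · split at h
            · -- the pair is {u, w}; show w must be the last element
              rename_i hcond
              by_cases hwlast : w = l.getLast hlne
              · rcases hcond with ⟨h1, h2⟩ | ⟨h1, h2⟩
                · exact Or.inr (Or.inl ⟨h1, by rw [h2, hlast]; exact hwlast⟩)
                · exact Or.inr (Or.inr ⟨h2, by rw [h1, hlast]; exact hwlast⟩)
              · exfalso
                have hw : P₂.c u w ≠ none :=
                  ih6 w (by simp [hl]) hwlast
                rcases hcond with ⟨h1, h2⟩ | ⟨h1, h2⟩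
                · exact hw (by rw [← h1, ← h2]; exact hxy)
                · exact hw (by rw [← h1, ← h2, P₂.symm]; exact hxy)
            · exact Or.inl h
        · exact Or.inr (Or.inl ⟨h.1, by rw [h.2, hlast]⟩)
        · exact Or.inr (Or.inr ⟨h.1, by rw [h.2, hlast]⟩)
      · intro y hy hyne
        rw [hlast] at hyne
        rcases List.mem_cons.1 hy with rfl | hyl
        · have : P₂.c u y = P₁.c u y := ih4 y (by
            intro h
            exact (List.nodup_cons.1 hnd).1 h)
          rw [this, hP₁, if_pos (Or.inl ⟨rfl, rfl⟩)]
          exact Option.some_ne_none _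
        · exact ih6 y hyl hyne

end Rotate


section Fan

variable [Fintype V] [DecidableRel G.Adj]

/-- The Vizing fan argument: given a fan `L` around `u` starting with the uncoloured edge
`u-(L.head)`, we can recolour so that the head edge gets coloured, without uncolouring
anything else. -/
lemma fan_aux (u : V) (hdu : G.degree u < k)
    (hdnb : ∀ w, G.Adj u w → G.degree w < k)
    (L : List V) (P : PC G k) (v₀ : V)
    (hadj : ∀ w ∈ v₀ :: L, G.Adj u w) (hnd : (v₀ :: L).Nodup) (hu : u ∉ v₀ :: L)
    (h0 : P.c u v₀ = none)
    (hch : (v₀ :: L).Chain' (fun a b => ∃ γ, P.c u b = some γ ∧ P.missing a γ)) :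
    ∃ P' : PC G k, P'.c u v₀ ≠ none ∧
      (∀ x y, P'.c x y = none → P.c x y = none) := by
  have hneF : v₀ :: L ≠ [] := List.cons_ne_nil _ _
  set F := v₀ :: L with hFdef
  set t := F.getLast hneF with htdef
  have htmem : t ∈ F := List.getLast_mem hneF
  have hadjt : G.Adj u t := hadj t htmem
  have hut : u ≠ t := fun h => hu (h ▸ htmem)
  obtain ⟨β, hβ⟩ := P.exists_missing t (hdnb t hadjt)
  by_cases hβu : P.missing u β
  · -- rotate the whole fan and colour the last edge with β
    obtain ⟨P₂, ih1, ih2, ih3, ih4, ih5, ih6⟩ :=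
      rotate u F P hneF hadj hnd hu h0 hch
    have hm2u : P₂.missing u β := (ih1 β).2 hβu
    have hm2t : P₂.missing t β := by
      intro y hy
      by_cases hyu : y = u
      · rw [hyu, P₂.symm t u, ih2] at hy
        exact absurd hy (by simp)
      · rw [ih3 t y hut.symm hyu] at hy
        exact hβ y hy
    refine ⟨P₂.extend u t β hadjt hm2u hm2t, ?_, ?_⟩
    · rw [PC.extend_c]
      by_cases hv₀t : v₀ = t
      · rw [if_pos (Or.inl ⟨rfl, hv₀t⟩)]; exact Option.some_ne_none _
      · rw [if_neg (by tauto)]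
        exact ih6 v₀ (List.mem_cons_self) hv₀t
    · intro x y hxy
      rw [PC.extend_c] at hxy
      split at hxy
      · exact absurd hxy (by simp)
      · rename_i hcond
        rcases ih5 x y hxy with h | h | h
        · exact h
        · exact absurd (Or.inl h) hcond
        · exact absurd (Or.inr ⟨h.2, h.1⟩) hcond
  · -- β appears at u, on the edge to w'
    obtain ⟨w', hw'⟩ := (P.not_missing_iff u β).1 hβu
    have hw'u : w' ≠ u := by
      intro h
      rw [h, P.c_self] at hw'
      exact absurd hw' (by simp)
    have hadjw' : G.Adj u w' := P.supp hw'
    by_cases hmem : w' ∈ F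
    · -- Kempe chain case
      have hw'v₀ : w' ≠ v₀ := by
        intro h
        rw [h, h0] at hw'
        exact absurd hw' (by simp)
      have hw't : w' ≠ t := by
        intro h
        exact hβ u (by rw [P.symm t u, ← h]; exact hw')
      obtain ⟨s1, s2, hsplit⟩ := List.append_of_mem
        (List.mem_of_ne_of_mem (by exact hw'v₀) hmem)
      have hF : F = (v₀ :: s1) ++ (w' :: s2) := by rw [hFdef, hsplit]; rfl
      set Lp := v₀ :: s1 with hLpdef
      have hLpne : Lp ≠ [] := List.cons_ne_nil _ _
      set p := Lp.getLast hLpne with hpdef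
      have hpmemLp : p ∈ Lp := List.getLast_mem hLpne
      have hpmemF : p ∈ F := by rw [hF]; exact List.mem_append_left _ hpmemLp
      have hndF : (Lp ++ (w' :: s2)).Nodup := hF ▸ hnd
      have hnodupLp : Lp.Nodup := (List.nodup_append.1 hndF).1
      have hdisj : ∀ a ∈ Lp, a ∉ (w' :: s2) :=
        fun a ha hb => (List.nodup_append.1 hndF).2.2 a ha a hb rfl
      have hchF : (Lp ++ (w' :: s2)).Chain'
          (fun a b => ∃ γ, P.c u b = some γ ∧ P.missing a γ) := hF ▸ hch
      obtain ⟨hch1, hch2, hrel⟩ := List.isChain_append.1 hchF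
      have hrelpw' := hrel p (by rw [List.getLast?_eq_getLast_of_ne_nil hLpne]; rfl) w' rfl
      obtain ⟨γp, hgp1, hgp2pre⟩ := hrelpw'
      have hγpβ : γp = β := Option.some.inj (hgp1.symm.trans hw')
      rw [hγpβ] at hgp2pre
      have hgp2 : P.missing p β := hgp2pre
      -- now: P.missing p β, P.missing t β, P.c u w' = some β, α missing at u
      obtain ⟨α, hα⟩ := P.exists_missing u hdu
      have hαβ : α ≠ β := by
        intro h
        exact hβu (h ▸ hα)
      -- the α-β subgraph
      set K : SimpleGraph V := {
        Adj := fun x y => P.c x y = some α ∨ P.c x y = some β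
        symm := by
          constructor
          intro x y h
          rw [P.symm y x]
          exact h
        loopless := by
          constructor
          intro x h
          rw [P.c_self] at h
          rcases h with h | h <;> exact absurd h (by simp) } with hKdef
      have hKadj : ∀ x y, K.Adj x y ↔ (P.c x y = some α ∨ P.c x y = some β) := fun x y => Iff.rfl
      have hdegK : ∀ ⦃x y₁ y₂ y₃ : V⦄,
          K.Adj x y₁ → K.Adj x y₂ → K.Adj x y₃ → y₁ = y₂ ∨ y₁ = y₃ ∨ y₂ = y₃ := by
        intro x y₁ y₂ y₃ h1 h2 h3
        rcases h1 with h1 | h1 <;> rcases h2 with h2 | h2 <;> rcases h3 with h3 | h3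
        · exact Or.inl (P.proper h1 h2)
        · exact Or.inl (P.proper h1 h2)
        · exact Or.inr (Or.inl (P.proper h1 h3))
        · exact Or.inr (Or.inr (P.proper h2 h3))
        · exact Or.inr (Or.inr (P.proper h2 h3))
        · exact Or.inr (Or.inl (P.proper h1 h3))
        · exact Or.inl (P.proper h1 h2)
        · exact Or.inl (P.proper h1 h2)
      have hDu : Defic K u := by
        intro y z h1 h2
        have hy : P.c u y = some β := by
          rcases h1 with h | h
          · exact absurd h (hα y)
          · exact h
        have hz : P.c u z = some β := by
          rcases h2 with h | h
          · exact absurd h (hα z)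
          · exact h
        exact P.proper hy hz
      have hDp : Defic K p := by
        intro y z h1 h2
        have hy : P.c p y = some α := by
          rcases h1 with h | h
          · exact h
          · exact absurd h (hgp2 y)
        have hz : P.c p z = some α := by
          rcases h2 with h | h
          · exact h
          · exact absurd h (hgp2 z)
        exact P.proper hy hz
      have hDt : Defic K t := by
        intro y z h1 h2
        have hy : P.c t y = some α := by
          rcases h1 with h | h
          · exact h
          · exact absurd h (hβ y)
        have hz : P.c t z = some α := by
          rcases h2 with h | h
          · exact h
          · exact absurd h (hβ z)
        exact P.proper hy hz
      have hup : u ≠ p := fun h => hu (h ▸ hpmemF)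
      -- generic facts used in both cases
      have hne_of_uedge : ∀ b γ', P.c u b = some γ' → γ' ≠ α := by
        intro b γ' hb h
        exact hα b (h ▸ hb)
      -- t lies in the right part of the split
      have htright : t ∈ w' :: s2 := by
        have h1 : F.getLast? = some t := List.getLast?_eq_getLast_of_ne_nil hneF
        have h2 : F.getLast? = some ((w' :: s2).getLast (List.cons_ne_nil _ _)) := by
          rw [hF, List.getLast?_eq_getLast_of_ne_nil
            (List.append_ne_nil_of_right_ne_nil _ (List.cons_ne_nil _ _))]
          congr 1
          exact List.getLast_append_of_ne_nil _ _
        have h3 : t = (w' :: s2).getLast (List.cons_ne_nil _ _) :=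
          Option.some.inj (h1.symm.trans h2)
        rw [h3]
        exact List.getLast_mem _
      have hpt : p ≠ t := fun h' => hdisj p hpmemLp (h' ▸ htright)
      have hw'notLp : w' ∉ Lp := fun h => hdisj w' h (List.mem_cons_self)
      have hLpsubF : ∀ x ∈ Lp, x ∈ F := by
        intro x hx
        rw [hF]
        exact List.mem_append_left _ hx
      have huLp : u ∉ Lp := fun h => hu (hLpsubF u h)
      by_cases hreach : K.Reachable p u
      · -- u is on the Kempe chain of p: swap the chain of t instead, rotate the whole fan
        have hnreach_pt : ¬ K.Reachable p t := fun h =>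
          three_endpoint hdegK hDu hDp hDt hup hut hpt hreach h
        set S : Set V := {x | K.Reachable t x} with hSdef
        have hclosed : Closed P α β S := by
          intro x y hx hc
          exact SimpleGraph.Reachable.trans hx (SimpleGraph.Adj.reachable (hc : K.Adj x y))
        have huS : u ∉ S := fun h => hnreach_pt (hreach.trans (SimpleGraph.Reachable.symm h))
        have hpS : p ∉ S := fun h => hnreach_pt (SimpleGraph.Reachable.symm h)
        have htS : t ∈ S := SimpleGraph.Reachable.refl t
        set P₁ := P.swap α β S hclosed with hP₁def
        have h1u : ∀ y, P₁.c u y = P.c u y := P.swap_c_of_not_mem hclosed huS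
        have hm1t : P₁.missing t α := (P.swap_missing_alpha hclosed htS).2 hβ
        have hm1u : ∀ a, P₁.missing u a ↔ P.missing u a :=
          fun a => P.swap_missing_of_not_mem hclosed huS a
        -- transfer the fan chain condition to P₁
        have hch1' : F.Chain' (fun a b => ∃ γ, P₁.c u b = some γ ∧ P₁.missing a γ) := by
          simp only [List.Chain', List.isChain_iff_getElem] at hch ⊢
          intro i hi
          obtain ⟨γ', hg1, hg2⟩ := hch i hi
          refine ⟨γ', by rw [h1u]; exact hg1, ?_⟩
          have hγα : γ' ≠ α := hne_of_uedge _ _ hg1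
          by_cases hγβ : γ' = β
          · -- the next fan vertex is w', so the current one is p, which is not in S
            rw [hγβ] at hg1 hg2 ⊢
            have hbw' : F.get ⟨i+1, by omega⟩ = w' := P.proper hg1 hw'
            have hw'pos : F.get ⟨Lp.length, by
                rw [hF, List.length_append]; simp⟩ = w' := by
              have : F.get ⟨Lp.length, by rw [hF, List.length_append]; simp⟩ =
                  F[Lp.length]'(by rw [hF, List.length_append]; simp) := rfl
              rw [this, List.getElem_of_eq hF, List.getElem_append_right (le_refl _)]
              simp
            have hidx : i + 1 = Lp.length := by
              have h2 : F.get ⟨i+1, by omega⟩ =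
                  F.get ⟨Lp.length, by rw [hF, List.length_append]; simp⟩ := by
                rw [hbw', hw'pos]
              have h3 := (List.Nodup.get_inj_iff hnd).1 h2
              exact congrArg Fin.val h3
            have hap : F.get ⟨i, by omega⟩ = p := by
              have hilt : i < Lp.length := by omega
              have : F.get ⟨i, by omega⟩ = Lp[i]'hilt := by
                have : F.get ⟨i, by omega⟩ = F[i]'(by omega) := rfl
                rw [this, List.getElem_of_eq hF, List.getElem_append_left hilt]
              rw [this, hpdef, List.getLast_eq_getElem]
              congr 1
              omega
            rw [show F[i] = p from hap]
            rw [show F[i] = p from hap] at hg2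
            exact (P.swap_missing_of_not_mem hclosed hpS β).2 hg2
          · exact (P.swap_missing_other hclosed hγα hγβ _).2 hg2
        obtain ⟨P₂, ih1, ih2, ih3, ih4, ih5, ih6⟩ :=
          rotate u F P₁ hneF hadj hnd hu (by rw [h1u]; exact h0) hch1'
        rw [← htdef] at ih2 ih5 ih6
        have hm2uα : P₂.missing u α := (ih1 α).2 ((hm1u α).2 hα)
        have hm2tα : P₂.missing t α := by
          intro y hy
          by_cases hyu : y = u
          · rw [hyu, P₂.symm t u, ih2] at hy
            exact absurd hy (by simp)
          · rw [ih3 t y hut.symm hyu] at hy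
            exact hm1t y hy
        have hv₀t : v₀ ≠ t := fun h => hdisj v₀ (List.mem_cons_self) (h ▸ htright)
        refine ⟨P₂.extend u t α hadjt hm2uα hm2tα, ?_, ?_⟩
        · rw [PC.extend_c, if_neg (by tauto)]
          exact ih6 v₀ (List.mem_cons_self) hv₀t
        · intro x y hxy
          rw [PC.extend_c] at hxy
          split at hxy
          · exact absurd hxy (by simp)
          · rename_i hcond
            rcases ih5 x y hxy with h | h | h
            · exact (P.swap_c_eq_none_iff hclosed x y).1 h
            · exact absurd (Or.inl h) hcond
            · exact absurd (Or.inr ⟨h.2, h.1⟩) hcond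
      · -- u is not on the Kempe chain of p: swap it, rotate the fan up to p
        set S : Set V := {x | K.Reachable p x} with hSdef
        have hclosed : Closed P α β S := by
          intro x y hx hc
          exact SimpleGraph.Reachable.trans hx (SimpleGraph.Adj.reachable (hc : K.Adj x y))
        have huS : u ∉ S := hreach
        have hpS : p ∈ S := SimpleGraph.Reachable.refl p
        set P₁ := P.swap α β S hclosed with hP₁def
        have h1u : ∀ y, P₁.c u y = P.c u y := P.swap_c_of_not_mem hclosed huS
        have hm1p : P₁.missing p α := (P.swap_missing_alpha hclosed hpS).2 hgp2
        have hm1u : ∀ a, P₁.missing u a ↔ P.missing u a :=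
          fun a => P.swap_missing_of_not_mem hclosed huS a
        -- transfer the fan chain condition on the prefix Lp to P₁
        have hch1' : Lp.Chain' (fun a b => ∃ γ, P₁.c u b = some γ ∧ P₁.missing a γ) := by
          simp only [List.Chain', List.isChain_iff_getElem] at hch1 ⊢
          intro i hi
          obtain ⟨γ', hg1, hg2⟩ := hch1 i hi
          refine ⟨γ', by rw [h1u]; exact hg1, ?_⟩
          have hγα : γ' ≠ α := hne_of_uedge _ _ hg1
          have hγβ : γ' ≠ β := by
            intro h
            rw [h] at hg1
            exact hw'notLp ((P.proper hg1 hw') ▸ List.getElem_mem _)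
          exact (P.swap_missing_other hclosed hγα hγβ _).2 hg2
        obtain ⟨P₂, ih1, ih2, ih3, ih4, ih5, ih6⟩ :=
          rotate u Lp P₁ hLpne (fun x hx => hadj x (hLpsubF x hx)) hnodupLp huLp
            (by rw [h1u]; exact h0) hch1'
        rw [← hpdef] at ih2 ih5 ih6
        have hadjp : G.Adj u p := hadj p hpmemF
        have hm2uα : P₂.missing u α := (ih1 α).2 ((hm1u α).2 hα)
        have hm2pα : P₂.missing p α := by
          intro y hy
          by_cases hyu : y = u
          · rw [hyu, P₂.symm p u, ih2] at hy
            exact absurd hy (by simp)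
          · rw [ih3 p y hup.symm hyu] at hy
            exact hm1p y hy
        refine ⟨P₂.extend u p α hadjp hm2uα hm2pα, ?_, ?_⟩
        · rw [PC.extend_c]
          by_cases hv₀p : v₀ = p
          · rw [if_pos (Or.inl ⟨rfl, hv₀p⟩)]
            exact Option.some_ne_none _
          · rw [if_neg (by tauto)]
            exact ih6 v₀ (List.mem_cons_self) hv₀p
        · intro x y hxy
          rw [PC.extend_c] at hxy
          split at hxy
          · exact absurd hxy (by simp)
          · rename_i hcond
            rcases ih5 x y hxy with h | h | h
            · exact (P.swap_c_eq_none_iff hclosed x y).1 h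
            · exact absurd (Or.inl h) hcond
            · exact absurd (Or.inr ⟨h.2, h.1⟩) hcond
    · -- extend the fan with w'
      have hndext : ((v₀ :: L) ++ [w']).Nodup := by
        rw [List.nodup_append]
        refine ⟨hnd, List.nodup_singleton _, ?_⟩
        intro a ha b hb hab
        rw [List.mem_singleton] at hb
        subst hb
        subst hab
        exact hmem ha
      have hchext : ((v₀ :: L) ++ [w']).Chain'
          (fun a b => ∃ γ, P.c u b = some γ ∧ P.missing a γ) := by
        simp only [List.Chain', List.isChain_append]
        refine ⟨hch, List.isChain_singleton _, ?_⟩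
        intro x hx y hy
        rw [List.getLast?_eq_getLast_of_ne_nil hneF] at hx
        obtain rfl : x = t := by exact (Option.mem_some_iff.1 hx).symm ▸ rfl
        obtain rfl : y = w' := (Option.mem_some_iff.1 hy).symm ▸ rfl
        exact ⟨β, hw', hβ⟩
      have hext_eq : (v₀ :: L) ++ [w'] = v₀ :: (L ++ [w']) := rfl
      obtain ⟨P', hP'1, hP'2⟩ := fan_aux u hdu hdnb (L ++ [w']) P v₀
        (by rw [← hext_eq]; intro x hx
            rcases List.mem_append.1 hx with h | h
            · exact hadj x h
            · rw [List.mem_singleton] at h; subst h; exact hadjw')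
        (by rw [← hext_eq]; exact hndext)
        (by rw [← hext_eq]; intro hcon
            rcases List.mem_append.1 hcon with h | h
            · exact hu h
            · rw [List.mem_singleton] at h; exact hw'u h.symm)
        h0
        (by rw [← hext_eq]; exact hchext)
      exact ⟨P', hP'1, hP'2⟩
termination_by Fintype.card V - L.length
decreasing_by
  · simp only [List.length_append, List.length_singleton]
    have : (v₀ :: (L ++ [w'])).length ≤ Fintype.card V := hndext.length_le_card
    simp only [List.length_cons, List.length_append, List.length_singleton] at this
    omega

end Fan


section Complete

variable [Fintype V] [DecidableRel G.Adj]

lemma step (u v : V) (hdu : G.degree u < k) (hdnb : ∀ w, G.Adj u w → G.degree w < k)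
    (P : PC G k) (hadj : G.Adj u v) (h0 : P.c u v = none) :
    ∃ P' : PC G k, P'.c u v ≠ none ∧ (∀ x y, P'.c x y = none → P.c x y = none) := by
  refine fan_aux u hdu hdnb [] P v ?_ ?_ ?_ h0 ?_
  · intro w hw
    rw [List.mem_singleton] at hw
    subst hw
    exact hadj
  · exact List.nodup_singleton _
  · intro h
    rw [List.mem_singleton] at h
    exact hadj.ne h
  · exact List.isChain_singleton _

/-- Number of uncoloured adjacent ordered pairs. -/
noncomputable def uncol (P : PC G k) : ℕ :=
  ((Finset.univ ×ˢ Finset.univ).filter fun q : V × V => G.Adj q.1 q.2 ∧ P.c q.1 q.2 = none).card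

lemma complete (u : V) (hdu : G.degree u ≤ k - 1)
    (hdnb : ∀ w, G.Adj u w → G.degree w ≤ k - 1) :
    ∀ (n : ℕ) (P : PC G k), uncol P ≤ n →
      (∀ x y, G.Adj x y → P.c x y = none → x = u ∨ y = u) →
      ∃ P' : PC G k, ∀ x y, G.Adj x y → P'.c x y ≠ none := by
  intro n
  induction n with
  | zero =>
    intro P hn hstar
    refine ⟨P, fun x y hadj hnone => ?_⟩
    have : (x, y) ∈ ((Finset.univ ×ˢ Finset.univ).filter
        fun q : V × V => G.Adj q.1 q.2 ∧ P.c q.1 q.2 = none) := by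
      simp only [Finset.mem_filter, Finset.mem_product, Finset.mem_univ, true_and]
      exact ⟨hadj, hnone⟩
    have hpos : 0 < uncol P := Finset.card_pos.2 ⟨_, this⟩
    omega
  | succ n ih =>
    intro P hn hstar
    by_cases hex : ∃ x y, G.Adj x y ∧ P.c x y = none
    · obtain ⟨x, y, hadj, hnone⟩ := hex
      -- normalise so that the uncoloured edge is (u, v)
      obtain ⟨v, hadjv, hnonev⟩ : ∃ v, G.Adj u v ∧ P.c u v = none := by
        rcases hstar x y hadj hnone with h | h
        · exact ⟨y, h ▸ hadj, h ▸ hnone⟩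
        · exact ⟨x, h ▸ hadj.symm, by rw [P.symm]; exact h ▸ hnone⟩
      have hdpos : 0 < G.degree u := by
        rw [G.degree_pos_iff_exists_adj]
        exact ⟨v, hadjv⟩
      have hdu' : G.degree u < k := by omega
      have hdnb' : ∀ w, G.Adj u w → G.degree w < k := by
        intro w hw
        have := hdnb w hw
        omega
      obtain ⟨P₁, hP₁1, hP₁2⟩ := step u v hdu' hdnb' P hadjv hnonev
      have hsub : ((Finset.univ ×ˢ Finset.univ).filter
            fun q : V × V => G.Adj q.1 q.2 ∧ P₁.c q.1 q.2 = none) ⊂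
          ((Finset.univ ×ˢ Finset.univ).filter
            fun q : V × V => G.Adj q.1 q.2 ∧ P.c q.1 q.2 = none) := by
        constructor
        · intro q hq
          simp only [Finset.mem_filter, Finset.mem_product, Finset.mem_univ, true_and] at hq ⊢
          exact ⟨hq.1, hP₁2 _ _ hq.2⟩
        · intro hcon
          have : (u, v) ∈ ((Finset.univ ×ˢ Finset.univ).filter
              fun q : V × V => G.Adj q.1 q.2 ∧ P₁.c q.1 q.2 = none) := by
            apply hcon
            simp only [Finset.mem_filter, Finset.mem_product, Finset.mem_univ, true_and]
            exact ⟨hadjv, hnonev⟩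
          simp only [Finset.mem_filter, Finset.mem_product, Finset.mem_univ, true_and] at this
          exact hP₁1 this.2
      have hlt : uncol P₁ < uncol P := Finset.card_lt_card hsub
      refine ih P₁ (by unfold uncol at *; omega) ?_
      intro a b hab hnb
      exact hstar a b hab (hP₁2 a b hnb)
    · push_neg at hex
      exact ⟨P, fun x y hadj hnone => hex x y hadj hnone⟩

end Complete


section Assemble

/-- Initial partial colouring of `G` from a proper colouring of `G - u`. -/
lemma exists_init (u : V) (c₀ : (G.induce ({u}ᶜ : Set V)).edgeSet → Fin k)
    (hc₀ : ProperEdgeColoring (G.induce ({u}ᶜ : Set V)) k c₀) :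
    ∃ P : PC G k, ∀ x y, G.Adj x y → P.c x y = none → x = u ∨ y = u := by
  refine ⟨⟨fun x y => if h : G.Adj x y ∧ ¬ x = u ∧ ¬ y = u then
      some (c₀ ⟨s(⟨x, h.2.1⟩, ⟨y, h.2.2⟩), h.1⟩) else none, ?_, ?_, ?_⟩, ?_⟩
  · -- symmetry
    intro x y
    by_cases h1 : G.Adj x y ∧ ¬ x = u ∧ ¬ y = u
    · have h2 : G.Adj y x ∧ ¬ y = u ∧ ¬ x = u := ⟨h1.1.symm, h1.2.2, h1.2.1⟩
      rw [dif_pos h1, dif_pos h2]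
      congr 1
      exact congrArg c₀ (Subtype.ext Sym2.eq_swap)
    · have h2 : ¬ (G.Adj y x ∧ ¬ y = u ∧ ¬ x = u) :=
        fun h2 => h1 ⟨h2.1.symm, h2.2.2, h2.2.1⟩
      rw [dif_neg h1, dif_neg h2]
  · -- support
    intro x y a hxy
    split at hxy
    · exact (by assumption : G.Adj x y ∧ _).1
    · exact absurd hxy (by simp)
  · -- properness
    intro x y z a h1 h2
    split at h1
    case isFalse => exact absurd h1 (by simp)
    case isTrue hc1 =>
    split at h2
    case isFalse => exact absurd h2 (by simp)
    case isTrue hc2 =>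
    by_contra hyz
    have hne : (⟨s(⟨x, hc1.2.1⟩, ⟨y, hc1.2.2⟩), hc1.1⟩ :
          (G.induce ({u}ᶜ : Set V)).edgeSet) ≠ ⟨s(⟨x, hc2.2.1⟩, ⟨z, hc2.2.2⟩), hc2.1⟩ := by
      intro hcon
      have := Subtype.ext_iff.1 hcon
      dsimp only at this
      rw [Sym2.congr_right] at this
      exact hyz (Subtype.ext_iff.1 this)
    have hshare : ∃ v, v ∈ ((⟨s(⟨x, hc1.2.1⟩, ⟨y, hc1.2.2⟩), hc1.1⟩ :
          (G.induce ({u}ᶜ : Set V)).edgeSet) : Sym2 ({u}ᶜ : Set V)) ∧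
        v ∈ ((⟨s(⟨x, hc2.2.1⟩, ⟨z, hc2.2.2⟩), hc2.1⟩ :
          (G.induce ({u}ᶜ : Set V)).edgeSet) : Sym2 ({u}ᶜ : Set V)) :=
      ⟨⟨x, hc1.2.1⟩, Sym2.mem_mk_left _ _, Sym2.mem_mk_left _ _⟩
    have := hc₀ _ _ hne hshare
    apply this
    rw [Option.some.inj h1, Option.some.inj h2]
  · -- uncoloured edges touch u
    intro x y hadj hnone
    change (if h : G.Adj x y ∧ ¬ x = u ∧ ¬ y = u then some _ else none) = none at hnone
    split at hnone
    · exact absurd hnone (by simp)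
    · rename_i hcond
      by_contra hcon
      push_neg at hcon
      exact hcond ⟨hadj, hcon.1, hcon.2⟩

/-- A total proper partial colouring gives a proper edge colouring. -/
lemma exists_coloring (P : PC G k) (htot : ∀ x y, G.Adj x y → P.c x y ≠ none) :
    EdgeColorable G k := by
  set f : Sym2 V → Option (Fin k) :=
    Sym2.lift ⟨fun x y => P.c x y, fun a b => P.symm a b⟩ with hf
  have hlift : ∀ x y, f s(x, y) = P.c x y := fun x y => Sym2.lift_mk _ _ _
  have hsome : ∀ e : G.edgeSet, (f (e : Sym2 V)).isSome := by
    rintro ⟨e, he⟩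
    induction e using Sym2.ind with
    | _ x y =>
      rw [SimpleGraph.mem_edgeSet] at he
      rw [hlift, Option.isSome_iff_ne_none]
      exact htot x y he
  refine ⟨fun e => (f (e : Sym2 V)).get (hsome e), ?_⟩
  intro e e' hne hshare heq
  dsimp only at heq
  obtain ⟨v, hv1, hv2⟩ := hshare
  obtain ⟨w1, hw1⟩ := Sym2.mem_iff_exists.1 hv1
  obtain ⟨w2, hw2⟩ := Sym2.mem_iff_exists.1 hv2
  have h1 : P.c v w1 = some ((f (e : Sym2 V)).get (hsome e)) := by
    rw [← hlift v w1, ← hw1]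
    exact (Option.some_get _).symm
  have h2 : P.c v w2 = some ((f (e' : Sym2 V)).get (hsome e')) := by
    rw [← hlift v w2, ← hw2]
    exact (Option.some_get _).symm
  rw [← heq] at h2
  have hw : w1 = w2 := P.proper h1 h2
  exact hne (Subtype.ext (hw1.trans (by rw [hw, ← hw2])))

end Assemble

end VizingAux

open VizingAux in
/-- If u and all its neighbours have degree at most k - 1 and G - u is k-edge
colourable, then so is G. -/
theorem edgeColorable_extend_vertex {V : Type*} [Fintype V] [DecidableEq V]
    (G : SimpleGraph V) [DecidableRel G.Adj] (k : ℕ) (u : V)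
    (hu : G.degree u ≤ k - 1) (hnb : ∀ v : V, G.Adj u v → G.degree v ≤ k - 1)
    (h : EdgeColorable (G.induce ({u}ᶜ : Set V)) k) :
    EdgeColorable G k := by
  obtain ⟨c₀, hc₀⟩ := h
  obtain ⟨P₀, hstar⟩ := exists_init u c₀ hc₀
  obtain ⟨P', htot⟩ := complete u hu hnb (uncol P₀) P₀ le_rfl hstar
  exact exists_coloring P' htot
end

section
/- If G is a simple graph in which the set of vertices of maximum degree Δ induces a forest (contains no cycle), then G admits a proper Δ-edge colouring. -/
open SimpleGraph

namespace Fournier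

variable {V : Type*}

/-- A partial proper edge colouring of `G` with `k` colours. -/
structure PC (G : SimpleGraph V) (k : ℕ) where
  f : V → V → Option (Fin k)
  symm : ∀ u v, f u v = f v u
  adj : ∀ u v, f u v ≠ none → G.Adj u v
  proper : ∀ u v w, f u v ≠ none → f u v = f u w → v = w

variable {G : SimpleGraph V} {k : ℕ}

/-- colour `α` does not occur at `v`. -/
def Free (c : PC G k) (v : V) (α : Fin k) : Prop := ∀ u, c.f v u ≠ some α

/-- every edge of `G` is coloured. -/
def Total (c : PC G k) : Prop := ∀ u v, G.Adj u v → c.f u v ≠ none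

/-- `{u,v} = {a,b}` as unordered pairs. -/
def Pr (u v a b : V) : Prop := (u = a ∧ v = b) ∨ (u = b ∧ v = a)

lemma pr_symm {u v a b : V} (h : Pr u v a b) : Pr v u a b := by
  rcases h with ⟨h1, h2⟩ | ⟨h1, h2⟩
  · exact Or.inr ⟨h2, h1⟩
  · exact Or.inl ⟨h2, h1⟩

lemma pr_comm {u v a b : V} : Pr u v a b ↔ Pr v u a b := ⟨pr_symm, pr_symm⟩

lemma PC.f_eq_none_of_not_adj (c : PC G k) {u v : V} (h : ¬ G.Adj u v) : c.f u v = none := by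
  by_contra hne
  exact h (c.adj u v hne)

lemma PC.ne_of_some (c : PC G k) {u v : V} {α : Fin k} (h : c.f u v = some α) : u ≠ v :=
  (c.adj u v (by simp [h])).ne

lemma exists_free [Fintype V] [DecidableEq V] [DecidableRel G.Adj] (c : PC G k) (v : V)
    (h : ((G.neighborFinset v).filter (fun u => c.f v u ≠ none)).card < k) :
    ∃ α, Free c v α := by
  by_contra hc
  push_neg at hc
  simp only [Free, not_forall, not_not] at hc
  choose g hg using hc
  have hmem : ∀ α : Fin k, g α ∈ (G.neighborFinset v).filter (fun u => c.f v u ≠ none) := by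
    intro α
    rw [Finset.mem_filter, mem_neighborFinset]
    exact ⟨c.adj v (g α) (by simp [hg α]), by simp [hg α]⟩
  have hinj : Function.Injective g := by
    intro a b hab
    have : some a = some b := by rw [← hg a, ← hg b, hab]
    exact Option.some.inj this
  have := Finset.card_le_card_of_injOn (s := Finset.univ) g (fun α _ => hmem α) (Function.Injective.injOn hinj)
  simp only [Finset.card_univ, Fintype.card_fin] at this
  omega

/-- A vertex `v` with an uncoloured incident edge `(v,y)` and degree `≤ k` has a free colour. -/
lemma free_at_holeend [Fintype V] [DecidableEq V] [DecidableRel G.Adj] (c : PC G k) {v y : V}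
    (hadj : G.Adj v y) (hnone : c.f v y = none) (hd : G.degree v ≤ k) : ∃ α, Free c v α := by
  apply exists_free
  have hsub : (G.neighborFinset v).filter (fun u => c.f v u ≠ none)
      ⊆ (G.neighborFinset v).erase y := by
    intro u hu
    rw [Finset.mem_filter] at hu
    refine Finset.mem_erase.2 ⟨?_, hu.1⟩
    rintro rfl
    exact hu.2 hnone
  have h1 : ((G.neighborFinset v).erase y).card = G.degree v - 1 := by
    rw [Finset.card_erase_of_mem (by rwa [mem_neighborFinset])]
    rfl
  have h2 := Finset.card_le_card hsub
  have h3 : 1 ≤ G.degree v := by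
    rw [← card_neighborFinset_eq_degree]
    exact Finset.card_pos.2 ⟨y, by rwa [mem_neighborFinset]⟩
  omega

lemma free_at_lowdeg [Fintype V] [DecidableEq V] [DecidableRel G.Adj] (c : PC G k) {v : V}
    (hd : G.degree v < k) : ∃ α, Free c v α := by
  apply exists_free
  calc ((G.neighborFinset v).filter (fun u => c.f v u ≠ none)).card
      ≤ (G.neighborFinset v).card := Finset.card_le_card (Finset.filter_subset _ _)
    _ < k := hd

/-- From a total partial colouring we get an edge colouring in the required sense. -/
theorem edgeColorable_of_total (c : PC G k) (hc : Total c) : EdgeColorable G k := by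
  have key : ∀ e : Sym2 V, e ∈ G.edgeSet → (Sym2.lift ⟨c.f, c.symm⟩ e).isSome := by
    intro e
    refine Sym2.inductionOn e ?_
    intro x y hxy
    rw [Sym2.lift_mk]
    rw [SimpleGraph.mem_edgeSet] at hxy
    exact Option.isSome_iff_ne_none.2 (hc x y hxy)
  refine ⟨fun e => (Sym2.lift ⟨c.f, c.symm⟩ e.1).get (key e.1 e.2), ?_⟩
  intro e f hef ⟨v, hve, hvf⟩ heq
  dsimp only at heq
  obtain ⟨a, ha⟩ := Sym2.mem_iff_exists.1 hve
  obtain ⟨b, hb⟩ := Sym2.mem_iff_exists.1 hvf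
  have hab : a ≠ b := by
    intro h
    apply hef
    apply Subtype.ext
    rw [ha, hb, h]
  have hea : c.f v a = some ((Sym2.lift ⟨c.f, c.symm⟩ e.1).get (key e.1 e.2)) := by
    rw [Option.some_get, ha, Sym2.lift_mk]
  have heb : c.f v b = some ((Sym2.lift ⟨c.f, c.symm⟩ f.1).get (key f.1 f.2)) := by
    rw [Option.some_get, hb, Sym2.lift_mk]
  have hvab : c.f v a = c.f v b := by rw [hea, heb, heq]
  exact hab (c.proper v a b (by rw [hea]; exact Option.some_ne_none _) hvab)


section Recolor
variable [DecidableEq V]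

/-- Remove the colour of edge `a b`. -/
def PC.erase (c : PC G k) (a b : V) : PC G k where
  f u v := if (u = a ∧ v = b) ∨ (u = b ∧ v = a) then none else c.f u v
  symm u v := by
    have hiff : ((u = a ∧ v = b) ∨ (u = b ∧ v = a)) ↔ ((v = a ∧ u = b) ∨ (v = b ∧ u = a)) := by
      tauto
    rw [if_congr hiff rfl (c.symm u v)]
  adj u v h := by
    split at h
    · exact absurd rfl h
    · exact c.adj u v h
  proper u v w h he := by
    by_cases h1 : (u = a ∧ v = b) ∨ (u = b ∧ v = a)
    · rw [if_pos h1] at h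
      exact absurd rfl h
    · rw [if_neg h1] at h he
      by_cases h2 : (u = a ∧ w = b) ∨ (u = b ∧ w = a)
      · rw [if_pos h2] at he
        exact absurd he h
      · rw [if_neg h2] at he
        exact c.proper u v w h he

lemma erase_f_of (c : PC G k) {a b u v : V} (h : ¬ Pr u v a b) :
    (c.erase a b).f u v = c.f u v := if_neg h

lemma erase_f_pr (c : PC G k) {a b u v : V} (h : Pr u v a b) :
    (c.erase a b).f u v = none := if_pos h

/-- Colour edge `a b` with `γ`; requires `γ` absent at both ends (apart from `a b` itself). -/
def PC.paint (c : PC G k) (a b : V) (γ : Fin k) (hab : G.Adj a b)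
    (ha : ∀ w, w ≠ b → c.f a w ≠ some γ) (hb : ∀ w, w ≠ a → c.f b w ≠ some γ) : PC G k where
  f u v := if (u = a ∧ v = b) ∨ (u = b ∧ v = a) then some γ else c.f u v
  symm u v := by
    have hiff : ((u = a ∧ v = b) ∨ (u = b ∧ v = a)) ↔ ((v = a ∧ u = b) ∨ (v = b ∧ u = a)) := by
      tauto
    rw [if_congr hiff rfl (c.symm u v)]
  adj u v h := by
    split at h
    case isTrue hc =>
      rcases hc with ⟨hu, hv⟩ | ⟨hu, hv⟩
      · rw [hu, hv]; exact hab
      · rw [hu, hv]; exact hab.symm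
    case isFalse => exact c.adj u v h
  proper u v w h he := by
    have hne := hab.ne
    by_cases h1 : (u = a ∧ v = b) ∨ (u = b ∧ v = a) <;>
      by_cases h2 : (u = a ∧ w = b) ∨ (u = b ∧ w = a)
    · rcases h1 with ⟨hu1, hv1⟩ | ⟨hu1, hv1⟩ <;> rcases h2 with ⟨hu2, hv2⟩ | ⟨hu2, hv2⟩
      · exact hv1.trans hv2.symm
      · exact absurd (hu1.symm.trans hu2) hne
      · exact absurd (hu2.symm.trans hu1) hne
      · exact hv1.trans hv2.symm
    · rw [if_pos h1, if_neg h2] at he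
      exfalso
      rcases h1 with ⟨hu, hv⟩ | ⟨hu, hv⟩
      · have hwb : w ≠ b := fun hw => h2 (Or.inl ⟨hu, hw⟩)
        have he2 : c.f u w = some γ := he.symm
        rw [hu] at he2
        exact ha w hwb he2
      · have hwa : w ≠ a := fun hw => h2 (Or.inr ⟨hu, hw⟩)
        have he2 : c.f u w = some γ := he.symm
        rw [hu] at he2
        exact hb w hwa he2
    · rw [if_neg h1, if_pos h2] at he
      exfalso
      rcases h2 with ⟨hu, hw⟩ | ⟨hu, hw⟩
      · have hvb : v ≠ b := fun hv => h1 (Or.inl ⟨hu, hv⟩)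
        have he2 : c.f u v = some γ := he
        rw [hu] at he2
        exact ha v hvb he2
      · have hva : v ≠ a := fun hv => h1 (Or.inr ⟨hu, hv⟩)
        have he2 : c.f u v = some γ := he
        rw [hu] at he2
        exact hb v hva he2
    · rw [if_neg h1, if_neg h2] at he
      rw [if_neg h1] at h
      exact c.proper u v w h he

lemma paint_f_of (c : PC G k) {a b u v : V} {γ} {hab ha hb} (h : ¬ Pr u v a b) :
    (c.paint a b γ hab ha hb).f u v = c.f u v := if_neg h

lemma paint_f_pr (c : PC G k) {a b u v : V} {γ} {hab ha hb} (h : Pr u v a b) :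
    (c.paint a b γ hab ha hb).f u v = some γ := if_pos h

/-- Move a colour: uncolour `x z` (coloured `β`) and colour the hole `x y` with `β`. -/
lemma step (c : PC G k) {x y z : V} {β : Fin k}
    (hxy : G.Adj x y) (hhole : c.f x y = none) (hz : c.f x z = some β) (hfr : Free c y β) :
    ∃ c' : PC G k,
      c'.f x y = some β ∧ c'.f x z = none ∧
      (∀ u v, ¬ Pr u v x y → ¬ Pr u v x z → c'.f u v = c.f u v) ∧
      (∀ γ, Free c x γ ↔ Free c' x γ) ∧
      (∀ γ, Free c z γ → Free c' z γ) ∧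
      (∀ u v, c'.f u v = none ↔ ((c.f u v = none ∧ ¬ Pr u v x y) ∨ Pr u v x z)) := by
  have hxz : x ≠ z := c.ne_of_some hz
  have hxyne : x ≠ y := hxy.ne
  have hzy : z ≠ y := by
    intro h
    rw [h, hhole] at hz
    exact nomatch hz
  have ha : ∀ w, w ≠ y → (c.erase x z).f x w ≠ some β := by
    intro w hw
    by_cases hwz : Pr x w x z
    · rw [erase_f_pr c hwz]
      exact nofun
    · rw [erase_f_of c hwz]
      intro hcw
      apply hwz
      have := c.proper x z w (by simp [hz]) (hz.trans hcw.symm)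
      exact Or.inl ⟨rfl, this.symm⟩
  have hb : ∀ w, w ≠ x → (c.erase x z).f y w ≠ some β := by
    intro w _
    by_cases hwz : Pr y w x z
    · rw [erase_f_pr c hwz]
      exact nofun
    · rw [erase_f_of c hwz]
      exact hfr w
  refine ⟨(c.erase x z).paint x y β hxy ha hb, ?_, ?_, ?_, ?_, ?_, ?_⟩
  · exact paint_f_pr _ (Or.inl ⟨rfl, rfl⟩)
  · rw [paint_f_of _ (by
      rintro (⟨-, h⟩ | ⟨h, -⟩)
      · exact hzy h
      · exact hxyne h)]
    exact erase_f_pr c (Or.inl ⟨rfl, rfl⟩)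
  · intro u v h1 h2
    rw [paint_f_of _ h1, erase_f_of c h2]
  · intro γ
    constructor
    · intro hfree u
      have hγβ : γ ≠ β := by
        intro h
        exact hfree z (h ▸ hz)
      by_cases h1 : Pr x u x y
      · rw [paint_f_pr _ h1]
        exact fun hh => hγβ (Option.some.inj hh).symm
      · rw [paint_f_of _ h1]
        by_cases h2 : Pr x u x z
        · rw [erase_f_pr c h2]
          exact nofun
        · rw [erase_f_of c h2]
          exact hfree u
    · intro hfree u hcu
      by_cases h2 : u = z
      · rw [h2, hz] at hcu
        have hγβ : γ = β := (Option.some.inj hcu).symm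
        apply hfree y
        rw [paint_f_pr _ (Or.inl ⟨rfl, rfl⟩), hγβ]
      · by_cases h3 : u = y
        · rw [h3, hhole] at hcu
          exact nomatch hcu
        · apply hfree u
          have hp1 : ¬ Pr x u x y := by
            rintro (⟨-, h⟩ | ⟨h, -⟩)
            · exact h3 h
            · exact hxyne h
          have hp2 : ¬ Pr x u x z := by
            rintro (⟨-, h⟩ | ⟨h, -⟩)
            · exact h2 h
            · exact hxz h
          rw [paint_f_of _ hp1, erase_f_of c hp2]
          exact hcu
  · intro γ hfree u hcu
    have h1 : ¬ Pr z u x y := by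
      rintro (⟨h, -⟩ | ⟨h, -⟩)
      · exact hxz h.symm
      · exact hzy h
    rw [paint_f_of _ h1] at hcu
    by_cases h2 : Pr z u x z
    · rw [erase_f_pr c h2] at hcu
      exact nomatch hcu
    · rw [erase_f_of c h2] at hcu
      exact hfree u hcu
  · intro u v
    by_cases h1 : Pr u v x y
    · rw [paint_f_pr _ h1]
      have h2 : ¬ Pr u v x z := by
        rcases h1 with ⟨hu, hv⟩ | ⟨hu, hv⟩
        · rintro (⟨-, h⟩ | ⟨h, -⟩)
          · exact hzy (h.symm.trans hv)
          · exact hxz (hu.symm.trans h)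
        · rintro (⟨h, -⟩ | ⟨h, -⟩)
          · exact hxyne (h.symm.trans hu)
          · exact hzy (h.symm.trans hu)
      simp [h1, h2]
    · rw [paint_f_of _ h1]
      by_cases h2 : Pr u v x z
      · rw [erase_f_pr c h2]
        simp [h1, h2]
      · rw [erase_f_of c h2]
        simp [h1, h2]

/-- Fill the unique hole `x y` with a colour free at both ends: a total colouring results. -/
lemma fill (c : PC G k) {x y : V} (α : Fin k) (hxy : G.Adj x y) (hhole : c.f x y = none)
    (hfx : Free c x α) (hfy : Free c y α)
    (hfull : ∀ u v, G.Adj u v → ¬ Pr u v x y → c.f u v ≠ none) :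
    ∃ c' : PC G k, Total c' := by
  refine ⟨c.paint x y α hxy (fun w _ => hfx w) (fun w _ => hfy w), ?_⟩
  intro u v huv
  by_cases h1 : Pr u v x y
  · rw [paint_f_pr _ h1]
    exact Option.some_ne_none _
  · rw [paint_f_of _ h1]
    exact hfull u v huv h1

end Recolor
section Swap

/-- The subgraph of edges coloured `α` or `β`. -/
def abG (c : PC G k) (α β : Fin k) : SimpleGraph V where
  Adj u v := c.f u v = some α ∨ c.f u v = some β
  symm := by
    refine ⟨fun u v h => ?_⟩
    rwa [c.symm v u]
  loopless := by
    refine ⟨fun u h => ?_⟩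
    have hne : c.f u u ≠ none := by
      rcases h with h | h <;> simp [h]
    exact (c.adj u u hne).ne rfl

lemma abG_comm (c : PC G k) (α β : Fin k) : abG c α β = abG c β α := by
  ext u v
  exact or_comm

lemma abG_unique_nbr (c : PC G k) {α β : Fin k} {v : V} (hf : Free c v α ∨ Free c v β) :
    ∀ u₁ u₂, (abG c α β).Adj v u₁ → (abG c α β).Adj v u₂ → u₁ = u₂ := by
  intro u₁ u₂ h1 h2
  rcases hf with hf | hf
  · have e1 : c.f v u₁ = some β := h1.resolve_left (hf u₁)
    have e2 : c.f v u₂ = some β := h2.resolve_left (hf u₂)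
    exact c.proper v u₁ u₂ (by simp [e1]) (e1.trans e2.symm)
  · have e1 : c.f v u₁ = some α := h1.resolve_right (hf u₁)
    have e2 : c.f v u₂ = some α := h2.resolve_right (hf u₂)
    exact c.proper v u₁ u₂ (by simp [e1]) (e1.trans e2.symm)

lemma abG_two_nbrs (c : PC G k) (α β : Fin k) (v : V) :
    ∃ n₁ n₂, ∀ u, (abG c α β).Adj v u → u = n₁ ∨ u = n₂ := by
  classical
  by_cases hα : ∃ u, c.f v u = some α
  · obtain ⟨a, ha⟩ := hα
    by_cases hβ : ∃ u, c.f v u = some β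
    · obtain ⟨b, hb⟩ := hβ
      refine ⟨a, b, ?_⟩
      intro u hu
      rcases hu with hu | hu
      · exact Or.inl (c.proper v u a (by simp [hu]) (hu.trans ha.symm))
      · exact Or.inr (c.proper v u b (by simp [hu]) (hu.trans hb.symm))
    · refine ⟨a, a, ?_⟩
      intro u hu
      rcases hu with hu | hu
      · exact Or.inl (c.proper v u a (by simp [hu]) (hu.trans ha.symm))
      · exact absurd ⟨u, hu⟩ hβ
  · by_cases hβ : ∃ u, c.f v u = some β
    · obtain ⟨b, hb⟩ := hβ
      refine ⟨b, b, ?_⟩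
      intro u hu
      rcases hu with hu | hu
      · exact absurd ⟨u, hu⟩ hα
      · exact Or.inl (c.proper v u b (by simp [hu]) (hu.trans hb.symm))
    · refine ⟨v, v, fun u hu => ?_⟩
      exfalso
      rcases hu with h | h
      · exact hα ⟨u, h⟩
      · exact hβ ⟨u, h⟩

/-- Kempe swap of colours `α, β` on the connected component of `x₀`. -/
lemma swap (c : PC G k) (α β : Fin k) (hab : α ≠ β) (x₀ : V) :
    ∃ c' : PC G k,
      (∀ u v, ¬ (abG c α β).Reachable x₀ u → c'.f u v = c.f u v) ∧
      (∀ u v, c'.f u v = none ↔ c.f u v = none) ∧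
      (∀ u, (abG c α β).Reachable x₀ u → Free c u β → Free c' u α) := by
  classical
  set H := abG c α β with hH
  refine ⟨⟨fun (u v : V) =>
      if H.Reachable x₀ u ∧ (c.f u v = some α ∨ c.f u v = some β) then
        (if c.f u v = some α then some β else some α)
      else c.f u v, ?_, ?_, ?_⟩, ?_, ?_, ?_⟩
  · -- symm
    intro u v
    by_cases hadj : c.f u v = some α ∨ c.f u v = some β
    · have hadj' : c.f v u = some α ∨ c.f v u = some β := by rwa [c.symm v u]
      have hadjH : H.Adj u v := hadj
      have hreq : H.Reachable x₀ u ↔ H.Reachable x₀ v :=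
        ⟨fun hr => hr.trans hadjH.reachable, fun hr => hr.trans hadjH.symm.reachable⟩
      by_cases hr : H.Reachable x₀ u
      · have hc1 : H.Reachable x₀ u ∧ (c.f u v = some α ∨ c.f u v = some β) := ⟨hr, hadj⟩
        have hc2 : H.Reachable x₀ v ∧ (c.f v u = some α ∨ c.f v u = some β) :=
          ⟨hreq.1 hr, hadj'⟩
        rw [if_pos hc1, if_pos hc2, c.symm u v]
      · have hc1 : ¬(H.Reachable x₀ u ∧ (c.f u v = some α ∨ c.f u v = some β)) :=
          fun hc => hr hc.1
        have hc2 : ¬(H.Reachable x₀ v ∧ (c.f v u = some α ∨ c.f v u = some β)) :=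
          fun hc => (hreq.not.1 hr) hc.1
        rw [if_neg hc1, if_neg hc2, c.symm u v]
    · have hadj' : ¬(c.f v u = some α ∨ c.f v u = some β) := by rwa [c.symm v u]
      have hc1 : ¬(H.Reachable x₀ u ∧ (c.f u v = some α ∨ c.f u v = some β)) :=
        fun hc => hadj hc.2
      have hc2 : ¬(H.Reachable x₀ v ∧ (c.f v u = some α ∨ c.f v u = some β)) :=
        fun hc => hadj' hc.2
      rw [if_neg hc1, if_neg hc2, c.symm u v]
  · -- adj
    intro u v h
    split at h
    case isTrue hc => exact c.adj u v (by rcases hc.2 with h2 | h2 <;> simp [h2])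
    case isFalse => exact c.adj u v h
  · -- proper
    intro u v w h he
    by_cases hr : H.Reachable x₀ u
    · by_cases h1 : c.f u v = some α ∨ c.f u v = some β <;>
        by_cases h2 : c.f u w = some α ∨ c.f u w = some β
      · have hc1 : H.Reachable x₀ u ∧ (c.f u v = some α ∨ c.f u v = some β) := ⟨hr, h1⟩
        have hc2 : H.Reachable x₀ u ∧ (c.f u w = some α ∨ c.f u w = some β) := ⟨hr, h2⟩
        rw [if_pos hc1, if_pos hc2] at he
        have : c.f u v = c.f u w := by
          rcases h1 with e1 | e1 <;> rcases h2 with e2 | e2 <;>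
            rw [e1, e2] <;> rw [e1, e2] at he <;> simp_all
        exact c.proper u v w (by rcases h1 with e1 | e1 <;> simp [e1]) this
      · have hc1 : H.Reachable x₀ u ∧ (c.f u v = some α ∨ c.f u v = some β) := ⟨hr, h1⟩
        have hc2 : ¬(H.Reachable x₀ u ∧ (c.f u w = some α ∨ c.f u w = some β)) :=
          fun hc => h2 hc.2
        rw [if_pos hc1, if_neg hc2] at he
        exfalso
        apply h2
        rw [← he]
        split
        · exact Or.inr rfl
        · exact Or.inl rfl
      · have hc2 : H.Reachable x₀ u ∧ (c.f u w = some α ∨ c.f u w = some β) := ⟨hr, h2⟩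
        have hc1 : ¬(H.Reachable x₀ u ∧ (c.f u v = some α ∨ c.f u v = some β)) :=
          fun hc => h1 hc.2
        rw [if_neg hc1, if_pos hc2] at he
        exfalso
        apply h1
        rw [he]
        split
        · exact Or.inr rfl
        · exact Or.inl rfl
      · have hc1 : ¬(H.Reachable x₀ u ∧ (c.f u v = some α ∨ c.f u v = some β)) :=
          fun hc => h1 hc.2
        have hc2 : ¬(H.Reachable x₀ u ∧ (c.f u w = some α ∨ c.f u w = some β)) :=
          fun hc => h2 hc.2
        rw [if_neg hc1, if_neg hc2] at he
        rw [if_neg hc1] at h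
        exact c.proper u v w h he
    · have hc1 : ¬(H.Reachable x₀ u ∧ (c.f u v = some α ∨ c.f u v = some β)) :=
        fun hc => hr hc.1
      have hc2 : ¬(H.Reachable x₀ u ∧ (c.f u w = some α ∨ c.f u w = some β)) :=
        fun hc => hr hc.1
      rw [if_neg hc1, if_neg hc2] at he
      rw [if_neg hc1] at h
      exact c.proper u v w h he
  · -- unchanged away from the component
    intro u v hnr
    dsimp only
    have hc1 : ¬(H.Reachable x₀ u ∧ (c.f u v = some α ∨ c.f u v = some β)) :=
      fun hc => hnr hc.1
    rw [if_neg hc1]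
  · -- supports equal
    intro u v
    dsimp only
    split
    case isTrue hc =>
      constructor
      · intro hh
        split at hh <;> exact nomatch hh
      · intro hh
        rcases hc.2 with h2 | h2 <;> rw [hh] at h2 <;> exact nomatch h2
    case isFalse => exact Iff.rfl
  · -- freeness swap
    intro u hr hfree v
    dsimp only
    by_cases hadj : c.f u v = some α ∨ c.f u v = some β
    · have hc1 : H.Reachable x₀ u ∧ (c.f u v = some α ∨ c.f u v = some β) := ⟨hr, hadj⟩
      rw [if_pos hc1]
      by_cases hfa : c.f u v = some α
      · rw [if_pos hfa]
        exact fun hh => hab (Option.some.inj hh).symm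
      · exfalso
        exact hfree v (hadj.resolve_left hfa)
    · have hc1 : ¬(H.Reachable x₀ u ∧ (c.f u v = some α ∨ c.f u v = some β)) :=
        fun hc => hadj hc.2
      rw [if_neg hc1]
      exact fun hh => hadj (Or.inl hh)

/-- If the hole `x z` cannot be filled after a Kempe swap, `x` and `z` are joined
in the `α β` subgraph. -/
lemma reach_of_stuck [DecidableEq V] (hncol : ¬ ∃ c : PC G k, Total c) (c : PC G k) {x z : V} {α β : Fin k}
    (hab : α ≠ β) (hxz : G.Adj x z) (hhole : c.f x z = none)
    (hfull : ∀ u v, G.Adj u v → ¬ Pr u v x z → c.f u v ≠ none)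
    (hfx : Free c x α) (hfz : Free c z β) : (abG c α β).Reachable x z := by
  by_contra hnr
  obtain ⟨c', hfar, hsupp, hnear⟩ := swap c α β hab z
  have hfz' : Free c' z α := hnear z (Reachable.refl z) hfz
  have hfx' : Free c' x α := by
    intro u
    rw [hfar x u (fun hr => hnr hr.symm)]
    exact hfx u
  have hhole' : c'.f x z = none := (hsupp x z).2 hhole
  have hfull' : ∀ u v, G.Adj u v → ¬ Pr u v x z → c'.f u v ≠ none := by
    intro u v huv hp hnone
    exact hfull u v huv hp ((hsupp u v).1 hnone)
  exact hncol (fill c' α hxz hhole' hfx' hfz' hfull')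

end Swap
/-- A (linear Vizing) fan at `x` starting from the hole-end `y`, newest vertex first. -/
inductive IsFan {V : Type*} {G : SimpleGraph V} {k : ℕ} (c : PC G k) (x y : V) : List V → Prop
  | base : IsFan c x y [y]
  | cons {w z : V} {L : List V} (hL : IsFan c x y (z :: L)) (β : Fin k)
      (hfree : Free c z β) (hcol : c.f x w = some β) (hnew : w ∉ z :: L) :
      IsFan c x y (w :: z :: L)

section Fan
variable [DecidableEq V]

lemma fan_mem_col {c : PC G k} {x y : V} {L : List V} (h : IsFan c x y L) :
    ∀ v ∈ L, v = y ∨ c.f x v ≠ none := by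
  induction h with
  | base =>
    intro v hv
    rw [List.mem_singleton] at hv
    exact Or.inl hv
  | cons hL β hfree hcol hnew ih =>
    intro v hv
    rcases List.mem_cons.1 hv with rfl | hv
    · exact Or.inr (by simp [hcol])
    · exact ih v hv

lemma fan_adj {c : PC G k} {x y : V} {L : List V} (hadj : G.Adj x y) (h : IsFan c x y L) :
    ∀ v ∈ L, G.Adj x v := by
  intro v hv
  rcases fan_mem_col h v hv with rfl | hc
  · exact hadj
  · exact c.adj x v hc

lemma fan_nodup {c : PC G k} {x y : V} {L : List V} (h : IsFan c x y L) : L.Nodup := by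
  induction h with
  | base => exact List.nodup_singleton y
  | cons hL β hfree hcol hnew ih => exact List.nodup_cons.2 ⟨hnew, ih⟩

lemma fan_last {c : PC G k} {x y : V} {L : List V} (h : IsFan c x y L) :
    ∃ A, L = A ++ [y] := by
  induction h with
  | base => exact ⟨[], rfl⟩
  | cons hL β hfree hcol hnew ih =>
    obtain ⟨A, hA⟩ := ih
    exact ⟨_ :: A, by rw [List.cons_append, hA]⟩

lemma fan_tail {c : PC G k} {x y : V} {a : V} {M : List V} (h : IsFan c x y (a :: M))
    (hM : M ≠ []) : IsFan c x y M := by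
  cases h with
  | base => exact absurd rfl hM
  | cons hL β hfree hcol hnew => exact hL

lemma fan_suffix {c : PC G k} {x y : V} {A B : List V} (h : IsFan c x y (A ++ B))
    (hB : B ≠ []) : IsFan c x y B := by
  induction A with
  | nil => exact h
  | cons a A' ih =>
    apply ih
    rw [List.cons_append] at h
    exact fan_tail h (by
      intro hc
      rcases List.append_eq_nil_iff.1 hc with ⟨-, h2⟩
      exact hB h2)

lemma fan_consec {c : PC G k} {x y : V} {L : List V} (h : IsFan c x y L)
    {A B : List V} {a b : V} (hEq : L = A ++ a :: b :: B) :
    ∃ γ, Free c b γ ∧ c.f x a = some γ := by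
  have hsuf : IsFan c x y (a :: b :: B) := fan_suffix (hEq ▸ h) (by simp)
  cases hsuf with
  | cons hL β hfree hcol hnew => exact ⟨β, hfree, hcol⟩

/-- Rotating ("shifting") the fan: the hole moves from `x y` to `x t` where `t` is the
fan head; every fan edge inherits the colour of its successor. -/
lemma rot (c : PC G k) {x y : V} (hadj : G.Adj x y) (hhole : c.f x y = none) :
    ∀ (M : List V) (t : V), IsFan c x y (t :: M) →
    ∃ c' : PC G k,
      c'.f x t = none ∧
      (∀ u v, (∀ w ∈ t :: M, ¬ Pr u v x w) → c'.f u v = c.f u v) ∧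
      (∀ (A : List V) (a b : V) (B : List V), t :: M = A ++ a :: b :: B →
        c'.f x b = c.f x a) ∧
      (∀ γ, Free c x γ ↔ Free c' x γ) ∧
      (∀ γ, Free c t γ → Free c' t γ) ∧
      (∀ u v, c'.f u v = none ↔ ((c.f u v = none ∧ ¬ Pr u v x y) ∨ Pr u v x t)) := by
  intro M
  induction M with
  | nil =>
    intro t hL
    cases hL with
    | base =>
      refine ⟨c, hhole, fun u v _ => rfl, ?_, fun γ => Iff.rfl, fun γ h => h, ?_⟩
      · intro A a b B hEq
        exfalso
        rcases A with - | ⟨a', A'⟩ <;> simp at hEq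
      · intro u v
        have hy : Pr u v x y → c.f u v = none := by
          rintro (⟨hu, hv⟩ | ⟨hu, hv⟩)
          · rw [hu, hv]; exact hhole
          · rw [hu, hv, c.symm]; exact hhole
        by_cases hp : Pr u v x y
        · simp [hp, hy hp]
        · simp [hp]
  | cons z M' IH =>
    intro t hL
    cases hL with
    | cons hL' β₀ hfr₀ hcol₀ hnew =>
      obtain ⟨c₁, ih1, ih2, ih3, ih4, ih5, ih6⟩ := IH z hL'
      have hxt : x ≠ t := c.ne_of_some hcol₀
      have hty : t ≠ y := by
        intro h
        rw [h, hhole] at hcol₀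
        exact nomatch hcol₀
      have hAdjxz : G.Adj x z := fan_adj hadj hL' z (List.mem_cons_self)
      have hfanne : ∀ w ∈ z :: M', w ≠ x := fun w hw => (fan_adj hadj hL' w hw).ne'
      have c₁xt : c₁.f x t = some β₀ := by
        rw [ih2 x t (by
          intro w hw
          rintro (⟨-, h⟩ | ⟨h, -⟩)
          · exact hnew (h ▸ hw)
          · exact hfanne w hw h.symm)]
        exact hcol₀
      have hfz₁ : Free c₁ z β₀ := ih5 β₀ hfr₀
      obtain ⟨c', s1, s2, s3, s4, s5, s6⟩ := step c₁ hAdjxz ih1 c₁xt hfz₁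
      have hxz : x ≠ z := hAdjxz.ne
      refine ⟨c', s2, ?_, ?_, ?_, ?_, ?_⟩
      · -- R2
        intro u v hav
        rw [s3 u v (hav z (by simp)) (hav t (by simp))]
        exact ih2 u v (fun w hw => hav w (List.mem_cons_of_mem t hw))
      · -- R3
        intro A a b B hEq
        rcases A with - | ⟨a', A'⟩
        · simp only [List.nil_append, List.cons.injEq] at hEq
          obtain ⟨rfl, rfl, -⟩ := hEq
          rw [s1, hcol₀]
        · simp only [List.cons_append, List.cons.injEq] at hEq
          obtain ⟨-, hEq'⟩ := hEq
          have hbM : b ∈ M' := by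
            rcases A' with - | ⟨a'', A''⟩
            · simp only [List.nil_append, List.cons.injEq] at hEq'
              obtain ⟨-, rfl⟩ := hEq'
              simp
            · simp only [List.cons_append, List.cons.injEq] at hEq'
              obtain ⟨-, hEq''⟩ := hEq'
              rw [hEq'']
              simp
          have hbz : b ≠ z := by
            intro h
            have := fan_nodup hL'
            rw [List.nodup_cons] at this
            exact this.1 (h ▸ hbM)
          have hbt : b ≠ t := by
            intro h
            exact hnew (h ▸ List.mem_cons_of_mem z hbM)
          rw [s3 x b (by
            rintro (⟨-, h⟩ | ⟨h, -⟩)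
            · exact hbz h
            · exact hxz h) (by
            rintro (⟨-, h⟩ | ⟨h, -⟩)
            · exact hbt h
            · exact hxt h)]
          exact ih3 A' a b B hEq'
      · -- R4
        intro γ
        exact (ih4 γ).trans (s4 γ)
      · -- R5
        intro γ hf
        apply s5
        intro u
        rw [ih2 t u (by
          intro w hw
          rintro (⟨h, -⟩ | ⟨h, -⟩)
          · exact hxt h.symm
          · exact hnew (h ▸ hw))]
        exact hf u
      · -- R6
        intro u v
        rw [s6 u v, ih6 u v]
        have hkey : Pr u v x z → ¬(c.f u v = none ∧ ¬ Pr u v x y) := by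
          intro hp ⟨hn, hnxy⟩
          by_cases hzy : z = y
          · exact hnxy (hzy ▸ hp)
          · have hcz : c.f x z ≠ none :=
              (fan_mem_col hL' z (List.mem_cons_self)).resolve_left hzy
            rcases hp with ⟨hu, hv⟩ | ⟨hu, hv⟩
            · rw [hu, hv] at hn
              exact hcz hn
            · rw [hu, hv] at hn
              rw [c.symm] at hcz
              exact hcz hn
        constructor
        · rintro (⟨hA | hpz, hnz⟩ | hpt)
          · exact Or.inl hA
          · exact absurd hpz hnz
          · exact Or.inr hpt
        · rintro (hA | hpt)
          · by_cases hpz : Pr u v x z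
            · exact absurd hA (hkey hpz)
            · exact Or.inl ⟨Or.inl hA, hpz⟩
          · exact Or.inr hpt

end Fan
section Paths
open SimpleGraph.Walk

variable {K : SimpleGraph V}

lemma getVert_one_mem_support {v u : V} (r : K.Walk v u) : r.getVert 1 ∈ r.support := by
  cases r with
  | nil => exact List.mem_singleton.2 rfl
  | cons h r' =>
    rw [Walk.getVert_cons_succ, Walk.getVert_zero, Walk.support_cons]
    exact List.mem_cons_of_mem _ r'.start_mem_support

/-- In a path, an edge at the starting vertex must be the first edge. -/
lemma edge_start {v u : V} (r : K.Walk v u) (hr : r.IsPath) (x : V)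
    (hx : s(v, x) ∈ r.edges) : x = r.getVert 1 := by
  cases r with
  | nil => simp at hx
  | cons h r' =>
    rw [Walk.edges_cons, List.mem_cons] at hx
    rw [Walk.getVert_cons_succ, Walk.getVert_zero]
    rcases hx with hx | hx
    · rw [Sym2.eq_iff] at hx
      rcases hx with ⟨-, hxb⟩ | ⟨hvb, -⟩
      · exact hxb
      · exact absurd hvb h.ne
    · exfalso
      have hvs : v ∈ r'.support := Walk.fst_mem_support_of_mem_edges r' hx
      exact ((Walk.cons_isPath_iff h r').1 hr).2 hvs

/-- In a graph of max degree ≤ 2, a path can only be left at its start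
(given the far end has a unique neighbour). -/
lemma path_escape (htwo : ∀ v : V, ∃ n₁ n₂, ∀ u, K.Adj v u → u = n₁ ∨ u = n₂) :
    ∀ {s d : V} (p : K.Walk s d), p.IsPath →
    (∀ u₁ u₂, K.Adj d u₁ → K.Adj d u₂ → u₁ = u₂) →
    ∀ v ∈ p.support, ∀ u, K.Adj v u → u ∈ p.support ∨ v = s := by
  intro s d p
  induction p with
  | nil =>
    intro _ _ v hv u _
    right
    simpa using hv
  | @cons c₁ c₂ c₃ h q ih =>
    intro hp hd v hv u hu
    have hq : q.IsPath := ((Walk.cons_isPath_iff h q).1 hp).1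
    have hs : c₁ ∉ q.support := ((Walk.cons_isPath_iff h q).1 hp).2
    rw [Walk.support_cons, List.mem_cons] at hv
    rcases hv with rfl | hv
    · right; rfl
    · rcases ih hq hd v hv u hu with hmem | rfl
      · left
        rw [Walk.support_cons]
        exact List.mem_cons_of_mem _ hmem
      · -- v is the start of q
        left
        cases q with
        | nil =>
          have huc : u = c₁ := hd u c₁ hu h.symm
          rw [huc, Walk.support_cons]
          exact List.mem_cons_self
        | @cons _ d₂ _ h₂ q' =>
          have hs₃ : d₂ ∈ (Walk.cons h₂ q').support := by
            rw [Walk.support_cons]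
            exact List.mem_cons_of_mem _ q'.start_mem_support
          have hss₃ : c₁ ≠ d₂ := by
            intro hss
            exact hs (hss ▸ hs₃)
          obtain ⟨n₁, n₂, hn⟩ := htwo v
          have hus : u = c₁ ∨ u = d₂ := by
            rcases hn c₁ h.symm with h1 | h1 <;> rcases hn d₂ h₂ with h2 | h2 <;>
              rcases hn u hu with h3 | h3 <;> first
                | (exact absurd (h1.trans h2.symm) hss₃)
                | (exact Or.inl (h3.trans h1.symm))
                | (exact Or.inr (h3.trans h2.symm))
          rw [Walk.support_cons]
          rcases hus with rfl | rfl
          · exact List.mem_cons_self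
          · exact List.mem_cons_of_mem _ hs₃

/-- The support of a path between two unique-neighbour vertices is closed under adjacency. -/
lemma path_closed {a b : V} (hab : a ≠ b) (p : K.Walk a b) (hp : p.IsPath)
    (ha : ∀ u₁ u₂, K.Adj a u₁ → K.Adj a u₂ → u₁ = u₂)
    (hb : ∀ u₁ u₂, K.Adj b u₁ → K.Adj b u₂ → u₁ = u₂)
    (htwo : ∀ v, ∃ n₁ n₂, ∀ u, K.Adj v u → u = n₁ ∨ u = n₂) :
    ∀ v ∈ p.support, ∀ u, K.Adj v u → u ∈ p.support := by
  intro v hv u hu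
  rcases path_escape htwo p hp hb v hv u hu with hmem | rfl
  · exact hmem
  · cases p with
    | nil => exact absurd rfl hab
    | cons h q =>
      have : u = q.getVert 0 := by
        have := ha u _ hu h
        rwa [Walk.getVert_zero]
      rw [this, Walk.getVert_zero, Walk.support_cons]
      exact List.mem_cons_of_mem _ q.start_mem_support

/-- A connected graph of max degree ≤ 2 cannot contain three distinct vertices of degree ≤ 1. -/
lemma three (htwo : ∀ v, ∃ n₁ n₂, ∀ u, K.Adj v u → u = n₁ ∨ u = n₂)
    {a b e : V} (hab : a ≠ b) (hae : a ≠ e) (hbe : b ≠ e)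
    (ha : ∀ u₁ u₂, K.Adj a u₁ → K.Adj a u₂ → u₁ = u₂)
    (hb : ∀ u₁ u₂, K.Adj b u₁ → K.Adj b u₂ → u₁ = u₂)
    (he : ∀ u₁ u₂, K.Adj e u₁ → K.Adj e u₂ → u₁ = u₂)
    (hrb : K.Reachable a b) (hre : K.Reachable a e) : False := by
  classical
  obtain ⟨w⟩ := hrb
  set p : K.Walk a b := w.toPath.1 with hpdef
  have hp : p.IsPath := w.toPath.2
  have hclosed := path_closed hab p hp ha hb htwo
  have hwalk : ∀ {u₀ w₀ : V} (q : K.Walk u₀ w₀), u₀ ∈ p.support → w₀ ∈ p.support := by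
    intro u₀ w₀ q
    induction q with
    | nil => exact id
    | cons hadj q' ih => exact fun hu => ih (hclosed _ hu _ hadj)
  obtain ⟨w₂⟩ := hre
  have hesup : e ∈ p.support := hwalk w₂ p.start_mem_support
  set q₁ : K.Walk a e := p.takeUntil e hesup with hq₁def
  set q₂ : K.Walk e b := p.dropUntil e hesup with hq₂def
  have hq₁ : q₁.IsPath := hp.takeUntil hesup
  have hq₂ : q₂.IsPath := hp.dropUntil hesup
  have hrev : q₁.reverse.IsPath := hq₁.reverse
  set e₁ := q₁.reverse.getVert 1 with he₁def
  set e₂ := q₂.getVert 1 with he₂def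
  have hne₁ : ¬ q₁.reverse.Nil := Walk.not_nil_of_ne hae.symm
  have hne₂ : ¬ q₂.Nil := Walk.not_nil_of_ne hbe.symm
  have hadj₁ : K.Adj e e₁ := q₁.reverse.adj_snd hne₁
  have hadj₂ : K.Adj e e₂ := q₂.adj_snd hne₂
  have heq : e₁ = e₂ := he e₁ e₂ hadj₁ hadj₂
  have he₁mem : e₁ ∈ q₁.support := by
    have := getVert_one_mem_support q₁.reverse
    rwa [Walk.support_reverse, List.mem_reverse] at this
  have he₂mem : e₂ ∈ q₂.support.tail := by
    have h2 := getVert_one_mem_support q₂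
    rw [q₂.support_eq_cons, List.mem_cons] at h2
    rcases h2 with h2 | h2
    · exact absurd h2.symm hadj₂.ne
    · exact h2
  have hnodup : (q₁.support ++ q₂.support.tail).Nodup := by
    have := hp.support_nodup
    rwa [← Walk.take_spec p hesup, Walk.support_append] at this
  exact (List.disjoint_of_nodup_append hnodup) he₁mem (heq ▸ he₂mem)

/-- A nonempty finite acyclic graph has a vertex with at most one neighbour. -/
lemma leaf {W : Type*} [Fintype W] [DecidableEq W] [Nonempty W] (K : SimpleGraph W)
    (hac : K.IsAcyclic) :
    ∃ v, ∀ u₁ u₂, K.Adj v u₁ → K.Adj v u₂ → u₁ = u₂ := by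
  by_contra hc
  push_neg at hc
  have grow : ∀ n, ∃ (v w : W) (p : K.Walk v w), p.IsPath ∧ p.length = n := by
    intro n
    induction n with
    | zero =>
      obtain ⟨v⟩ := ‹Nonempty W›
      exact ⟨v, v, Walk.nil, by simp, rfl⟩
    | succ n ih =>
      obtain ⟨v, w, p, hp, hlen⟩ := ih
      obtain ⟨u₁, u₂, h1, h2, h12⟩ := hc w
      have hz : ∃ u, K.Adj w u ∧ u ≠ p.reverse.getVert 1 := by
        by_cases hz1 : u₁ = p.reverse.getVert 1
        · refine ⟨u₂, h2, fun h => h12 ?_⟩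
          rw [hz1, ← h]
        · exact ⟨u₁, h1, hz1⟩
      obtain ⟨u, hu, huz⟩ := hz
      by_cases hmem : u ∈ p.support
      · exfalso
        have hmem' : u ∈ p.reverse.support := by
          rwa [Walk.support_reverse, List.mem_reverse]
        have hq : (p.reverse.takeUntil u hmem').IsPath := hp.reverse.takeUntil hmem'
        apply hac (Walk.cons hu.symm (p.reverse.takeUntil u hmem'))
        rw [Walk.cons_isCycle_iff]
        refine ⟨hq, fun he => ?_⟩
        have he' : s(w, u) ∈ p.reverse.edges := by
          have h3 := Walk.edges_takeUntil_subset p.reverse hmem' he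
          rwa [Sym2.eq_swap] at h3
        exact huz (edge_start p.reverse hp.reverse u he')
      · refine ⟨v, u, p.concat hu, ?_, by rw [Walk.length_concat, hlen]⟩
        have hrev : (p.concat hu).reverse.IsPath := by
          rw [Walk.reverse_concat]
          rw [Walk.cons_isPath_iff]
          refine ⟨hp.reverse, ?_⟩
          rwa [Walk.support_reverse, List.mem_reverse]
        have := hrev.reverse
        rwa [Walk.reverse_reverse] at this
  obtain ⟨v, w, p, hp, hlen⟩ := grow (Fintype.card W)
  have := hp.length_lt
  omega

end Paths
section VAL
variable [Fintype V] [DecidableEq V]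

lemma nodup_eq_append {l A B A' B' : List V} {b : V} (hnd : l.Nodup)
    (h1 : l = A ++ b :: B) (h2 : l = A' ++ b :: B') : A = A' ∧ B = B' := by
  subst h1
  induction A generalizing A' with
  | nil =>
    cases A' with
    | nil =>
      simp only [List.nil_append, List.cons.injEq] at h2
      exact ⟨rfl, h2.2⟩
    | cons a'' A'' =>
      exfalso
      simp only [List.nil_append, List.cons_append, List.cons.injEq] at h2
      obtain ⟨hb, hB⟩ := h2
      rw [List.nil_append, List.nodup_cons] at hnd
      apply hnd.1
      rw [hB]
      exact List.mem_append_right _ (List.mem_cons_self)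
  | cons a₀ A₀ ih =>
    cases A' with
    | nil =>
      exfalso
      simp only [List.nil_append, List.cons_append, List.cons.injEq] at h2
      obtain ⟨hb, hB⟩ := h2
      rw [List.cons_append, List.nodup_cons] at hnd
      apply hnd.1
      rw [hb]
      exact List.mem_append_right _ (List.mem_cons_self)
    | cons a₁ A₁ =>
      simp only [List.cons_append, List.cons.injEq] at h2
      obtain ⟨ha, htl⟩ := h2
      rw [List.cons_append, List.nodup_cons] at hnd
      obtain ⟨hA, hB⟩ := ih hnd.2 htl
      exact ⟨by rw [ha, hA], hB⟩

/-- uniqueness of the predecessor in a nodup list. -/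
lemma pred_unique {l : List V} (hnd : l.Nodup) {A B A' B' : List V} {a a' b : V}
    (h1 : l = A ++ a :: b :: B) (h2 : l = A' ++ a' :: b :: B') : a = a' := by
  have e1 : l = (A ++ [a]) ++ b :: B := by rw [h1]; simp
  have e2 : l = (A' ++ [a']) ++ b :: B' := by rw [h2]; simp
  have := (nodup_eq_append hnd e1 e2).1
  have h3 : (A ++ [a]).getLast? = (A' ++ [a']).getLast? := by rw [this]
  rw [List.getLast?_concat, List.getLast?_concat] at h3
  exact Option.some.inj h3

/-- Vizing's adjacency lemma, weak form: in a `k`-critical graph, the end `x` of any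
edge `x y` has a neighbour of degree `k` other than `y`. -/
lemma val1 (H : SimpleGraph V) [DecidableRel H.Adj] {k : ℕ}
    (hdeg : ∀ v, H.degree v ≤ k)
    (hncol : ¬ ∃ c : PC H k, Total c)
    (hcrit : ∀ x y : V, H.Adj x y → ∃ c : PC H k, c.f x y = none ∧
      ∀ u v, H.Adj u v → ¬ Pr u v x y → c.f u v ≠ none)
    {x y : V} (hxy : H.Adj x y) :
    ∃ z, H.Adj x z ∧ z ≠ y ∧ H.degree z = k := by
  classical
  by_contra hVAL
  push_neg at hVAL
  obtain ⟨c, hhole, hfull⟩ := hcrit x y hxy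
  obtain ⟨α, hfα⟩ := free_at_holeend c hxy hhole (hdeg x)
  have hfreemem : ∀ {L : List V}, IsFan c x y L → ∀ v ∈ L, ∃ γ, Free c v γ := by
    intro L hL v hv
    rcases fan_mem_col hL v hv with rfl | hcv
    · exact free_at_holeend c hxy.symm (by rw [c.symm]; exact hhole) (hdeg v)
    · have hadjv : H.Adj x v := c.adj x v hcv
      have hvy : v ≠ y := by
        intro h
        rw [h] at hcv
        exact hcv hhole
      exact free_at_lowdeg c (lt_of_le_of_ne (hdeg v) (hVAL v hadjv hvy))
  -- a maximal fan
  set P : ℕ → Prop := fun n => ∃ L, IsFan c x y L ∧ L.length = n with hPdef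
  have hP1 : P 1 := ⟨[y], IsFan.base, rfl⟩
  have hPbd : ∀ n, P n → n ≤ Fintype.card V := by
    rintro n ⟨L, hL, rfl⟩
    exact (fan_nodup hL).length_le_card
  have hcard1 : 1 ≤ Fintype.card V := Fintype.card_pos_iff.2 ⟨x⟩
  obtain ⟨L, hL, hLlen⟩ : P (Nat.findGreatest P (Fintype.card V)) :=
    Nat.findGreatest_spec hcard1 hP1
  have hLmax : ∀ L', IsFan c x y L' → L'.length ≤ L.length := by
    intro L' hL'
    by_contra hgt
    push_neg at hgt
    rw [hLlen] at hgt
    exact Nat.findGreatest_is_greatest hgt (hPbd _ ⟨L', hL', rfl⟩) ⟨L', hL', rfl⟩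
  obtain ⟨t, M, rfl⟩ : ∃ t M, L = t :: M := by
    cases hL with
    | base => exact ⟨y, [], rfl⟩
    | cons hL' β hfree hcol hnew => exact ⟨_, _, rfl⟩
  obtain ⟨β, hfβ⟩ := hfreemem hL t (List.mem_cons_self)
  have hadjxt : H.Adj x t := fan_adj hxy hL t (List.mem_cons_self)
  by_cases hβx : Free c x β
  · -- Case 1: rotate the whole fan and fill the final hole with β
    obtain ⟨cs, r1, r2, r3, r4, r5, r6⟩ := rot c hxy hhole M t hL
    have hfullt : ∀ u v, H.Adj u v → ¬ Pr u v x t → cs.f u v ≠ none := by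
      intro u v huv hpt hnone
      rcases (r6 u v).1 hnone with ⟨hn, hnxy⟩ | hp
      · exact hfull u v huv hnxy hn
      · exact hpt hp
    exact hncol (fill cs β hadjxt r1 ((r4 β).1 hβx) (r5 β hfβ) hfullt)
  · -- Case 2
    have hw' : ∃ w, c.f x w = some β := by
      by_contra hnw
      push_neg at hnw
      exact hβx hnw
    obtain ⟨w, hw⟩ := hw'
    have hαβ : α ≠ β := fun h => hβx (h ▸ hfα)
    have hwL : w ∈ t :: M := by
      by_contra hnew
      have hfan2 : IsFan c x y (w :: t :: M) := IsFan.cons hL β hfβ hw hnew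
      have := hLmax _ hfan2
      simp at this
    have hwt : w ≠ t := by
      intro h
      subst h
      exact hfβ x (by rw [c.symm]; exact hw)
    have hwy : w ≠ y := by
      intro h
      rw [h, hhole] at hw
      exact nomatch hw
    have hwM : w ∈ M := (List.mem_cons.1 hwL).resolve_left hwt
    obtain ⟨P₀, Q₀, hMsplit⟩ := List.append_of_mem hwM
    obtain ⟨A₀, hA₀⟩ := fan_last hL
    have hQ₀ : Q₀ ≠ [] := by
      rintro rfl
      have h1 : (t :: M).getLast? = some w := by
        have hrw : t :: M = (t :: P₀) ++ [w] := by rw [hMsplit, List.cons_append]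
        rw [hrw]
        exact List.getLast?_concat
      have h2 : (t :: M).getLast? = some y := by
        rw [hA₀]
        exact List.getLast?_concat
      rw [h1] at h2
      exact hwy (Option.some.inj h2)
    obtain ⟨z, Q', rfl⟩ : ∃ z Q', Q₀ = z :: Q' := by
      cases Q₀ with
      | nil => exact absurd rfl hQ₀
      | cons z Q' => exact ⟨z, Q', rfl⟩
    have hLsplit : t :: M = (t :: P₀) ++ w :: z :: Q' := by rw [hMsplit, List.cons_append]
    obtain ⟨γ, hfzβ, hcolw⟩ := fan_consec hL hLsplit
    have hγβ : γ = β := Option.some.inj (hcolw.symm.trans hw)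
    rw [hγβ] at hfzβ
    have hnodupL := fan_nodup hL
    have hnodupL' : ((t :: P₀) ++ w :: z :: Q').Nodup := by rwa [← hLsplit]
    have hwQ : w ∉ z :: Q' := by
      have h3 : (w :: z :: Q').Nodup := hnodupL'.of_append_right
      rw [List.nodup_cons] at h3
      exact h3.1
    have hwz : w ≠ z := fun h => hwQ (h ▸ List.mem_cons_self)
    have hzM : z ∈ M := by
      rw [hMsplit]
      exact List.mem_append_right _ (List.mem_cons_of_mem _ (List.mem_cons_self))
    have htz : t ≠ z := by
      rw [List.nodup_cons] at hnodupL
      intro h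
      exact hnodupL.1 (h ▸ hzM)
    have htw : t ≠ w := hwt.symm
    have hzL : z ∈ t :: M := List.mem_cons_of_mem _ hzM
    have hAdjxz : H.Adj x z := fan_adj hxy hL z hzL
    have hfansuf : IsFan c x y (z :: Q') := by
      have : t :: M = ((t :: P₀) ++ [w]) ++ z :: Q' := by
        rw [hLsplit]
        simp
      exact fan_suffix (this ▸ hL) (by simp)
    -- the colour β occurs at x only on the edge x w
    -- rotation to z
    obtain ⟨cj, j1, j2, j3, j4, j5, j6⟩ := rot c hxy hhole Q' z hfansuf
    have hfullz : ∀ u v, H.Adj u v → ¬ Pr u v x z → cj.f u v ≠ none := by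
      intro u v huv hpt hnone
      rcases (j6 u v).1 hnone with ⟨hn, hnxy⟩ | hp
      · exact hfull u v huv hnxy hn
      · exact hpt hp
    have hreachj : (abG cj α β).Reachable x z :=
      reach_of_stuck hncol cj hαβ hAdjxz j1 hfullz ((j4 α).1 hfα) (j5 β hfzβ)
    have hβval : ∀ {v' : V}, c.f x v' = some β → v' = w := by
      intro v' hv'
      exact (c.proper x w v' (by simp [hw]) (hw.trans hv'.symm)).symm
    -- the (α β)-graphs of c and cj coincide
    have habeq : abG cj α β = abG c α β := by
      ext u v
      show cj.f u v = some α ∨ cj.f u v = some β ↔ c.f u v = some α ∨ c.f u v = some β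
      by_cases htouch : ∃ w'' ∈ z :: Q', Pr u v x w''
      · obtain ⟨w'', hw''mem, hpw''⟩ := htouch
        have hmain : (cj.f x w'' ≠ some α ∧ cj.f x w'' ≠ some β) ∧
            (c.f x w'' ≠ some α ∧ c.f x w'' ≠ some β) := by
          have hcright : c.f x w'' ≠ some α ∧ c.f x w'' ≠ some β := by
            constructor
            · exact hfα w''
            · intro hcv
              exact hwQ ((hβval hcv) ▸ hw''mem)
          refine ⟨?_, hcright⟩
          rcases List.mem_cons.1 hw''mem with rfl | hw''Q
          · rw [j1]
            exact ⟨nofun, nofun⟩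
          · obtain ⟨P₂, Q₂, hQ'split⟩ := List.append_of_mem hw''Q
            have e1 : z :: Q' = (z :: P₂) ++ w'' :: Q₂ := by
              rw [hQ'split, List.cons_append]
            have e2 : z :: P₂ = (z :: P₂).dropLast ++ [(z :: P₂).getLast (by simp)] :=
              (List.dropLast_append_getLast (by simp)).symm
            set a := (z :: P₂).getLast (by simp) with hadef
            have e3 : z :: Q' = (z :: P₂).dropLast ++ a :: w'' :: Q₂ := by
              rw [e1]
              conv_lhs => rw [e2]
              rw [List.append_assoc, List.singleton_append]
            have hval := j3 _ _ _ _ e3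
            rw [hval]
            have haz : a ∈ z :: Q' := by
              rw [e1]
              exact List.mem_append_left _ (List.getLast_mem (by simp))
            constructor
            · exact hfα a
            · intro hcv
              exact hwQ ((hβval hcv) ▸ haz)
        rcases hpw'' with ⟨hu, hv⟩ | ⟨hu, hv⟩
        · rw [hu, hv]
          simp only [hmain.1.1, hmain.1.2, hmain.2.1, hmain.2.2, or_self]
        · rw [hu, hv, cj.symm, c.symm]
          simp only [hmain.1.1, hmain.1.2, hmain.2.1, hmain.2.2, or_self]
      · push_neg at htouch
        rw [j2 u v htouch]
    have hRA : (abG c α β).Reachable x z := habeq ▸ hreachj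
    -- full rotation of the fan
    obtain ⟨cs, s1, s2, s3, s4, s5, s6⟩ := rot c hxy hhole M t hL
    have hfullt : ∀ u v, H.Adj u v → ¬ Pr u v x t → cs.f u v ≠ none := by
      intro u v huv hpt hnone
      rcases (s6 u v).1 hnone with ⟨hn, hnxy⟩ | hp
      · exact hfull u v huv hnxy hn
      · exact hpt hp
    have hreachs : (abG cs α β).Reachable x t :=
      reach_of_stuck hncol cs hαβ hadjxt s1 hfullt ((s4 α).1 hfα) (s5 β hfβ)
    -- classification of the (α β)-edges of cs at x
    have hxcase : ∀ w'' ∈ t :: M, (cs.f x w'' = some α ∨ cs.f x w'' = some β) →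
        (((c.f x w'' = some α ∨ c.f x w'' = some β) ∧ w'' ≠ w) ∨ w'' = z) := by
      intro w'' hw''L hab2
      rcases List.mem_cons.1 hw''L with rfl | hw''M
      · rw [s1] at hab2
        rcases hab2 with h | h <;> exact absurd h nofun
      · obtain ⟨P₂, Q₂, hMsplit₂⟩ := List.append_of_mem hw''M
        have e1 : t :: M = (t :: P₂) ++ w'' :: Q₂ := by
          rw [hMsplit₂, List.cons_append]
        have e2 : t :: P₂ = (t :: P₂).dropLast ++ [(t :: P₂).getLast (by simp)] :=
          (List.dropLast_append_getLast (by simp)).symm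
        set a := (t :: P₂).getLast (by simp) with hadef
        have e3 : t :: M = (t :: P₂).dropLast ++ a :: w'' :: Q₂ := by
          rw [e1]
          conv_lhs => rw [e2]
          rw [List.append_assoc, List.singleton_append]
        have hval := s3 _ _ _ _ e3
        rw [hval] at hab2
        have haw : a = w := by
          rcases hab2 with h | h
          · exact absurd h (hfα a)
          · exact hβval h
        right
        have e4 : t :: M = (t :: P₂).dropLast ++ w :: w'' :: Q₂ := by
          rw [← haw]
          exact e3
        have e5 : t :: M = (t :: P₀) ++ w :: z :: Q' := by
          rw [List.cons_append]
          exact hLsplit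
        have hBB := (nodup_eq_append hnodupL e4 e5).2
        have h1 : w'' = z := by
          have := congrArg List.head? hBB
          simpa using this
        exact h1
    have hH2 : ∀ u v, (abG cs α β).Adj u v →
        ((abG c α β).Adj u v ∧ ¬ Pr u v x w) ∨ Pr u v x z := by
      intro u v huv
      have huv' : cs.f u v = some α ∨ cs.f u v = some β := huv
      by_cases htouch : ∃ w'' ∈ t :: M, Pr u v x w''
      · obtain ⟨w'', hw''mem, hpw''⟩ := htouch
        have hw''x : w'' ≠ x := (fan_adj hxy hL w'' hw''mem).ne'
        have hwx : w ≠ x := (fan_adj hxy hL w hwL).ne'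
        rcases hpw'' with ⟨hu, hv⟩ | ⟨hu, hv⟩
        · rw [hu, hv] at huv' ⊢
          rcases hxcase w'' hw''mem huv' with ⟨hab3, hne⟩ | hz2
          · left
            refine ⟨hab3, ?_⟩
            rintro (⟨-, h⟩ | ⟨h, -⟩)
            · exact hne h
            · exact hwx h.symm
          · exact Or.inr (Or.inl ⟨rfl, hz2⟩)
        · rw [hu, hv] at huv' ⊢
          have huv'' : cs.f x w'' = some α ∨ cs.f x w'' = some β := by
            rwa [cs.symm x w'']
          rcases hxcase w'' hw''mem huv'' with ⟨hab3, hne⟩ | hz2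
          · left
            constructor
            · show c.f w'' x = some α ∨ c.f w'' x = some β
              rwa [c.symm w'' x]
            · rintro (⟨h, -⟩ | ⟨h, -⟩)
              · exact hw''x h
              · exact hne h
          · exact Or.inr (Or.inr ⟨hz2, rfl⟩)
      · push_neg at htouch
        left
        have heq2 : cs.f u v = c.f u v := s2 u v htouch
        refine ⟨by rwa [heq2] at huv', fun hpr => htouch w hwL hpr⟩
    -- the component of x in abG c is closed under abG cs edges
    have hclosed : ∀ u v, (abG cs α β).Adj u v → (abG c α β).Reachable x u →
        (abG c α β).Reachable x v := by
      intro u v huv hru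
      rcases hH2 u v huv with ⟨h1, -⟩ | hp
      · exact hru.trans h1.reachable
      · rcases hp with ⟨hu, hv⟩ | ⟨hu, hv⟩
        · rw [hv]
          exact hRA
        · rw [hv]
    have hwalkstep : ∀ {u₀ v₀ : V} (q : (abG cs α β).Walk u₀ v₀),
        (abG c α β).Reachable x u₀ → (abG c α β).Reachable x v₀ := by
      intro u₀ v₀ q
      induction q with
      | nil => exact id
      | cons hadj q' ih => exact fun hr => ih (hclosed _ _ hadj hr)
    have hRB : (abG c α β).Reachable x t := by
      obtain ⟨wk⟩ := hreachs
      exact hwalkstep wk (Reachable.refl x)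
    exact three (abG_two_nbrs c α β) hAdjxz.ne hadjxt.ne htz.symm
      (abG_unique_nbr c (Or.inl hfα)) (abG_unique_nbr c (Or.inr hfzβ))
      (abG_unique_nbr c (Or.inr hfβ)) hRA hRB

end VAL
section Final
variable [Fintype V] [DecidableEq V]

theorem fournier_main (G : SimpleGraph V) [DecidableRel G.Adj]
    (h : (G.induce {v : V | G.degree v = G.maxDegree}).IsAcyclic) :
    EdgeColorable G G.maxDegree := by
  classical
  by_contra hcol
  set k := G.maxDegree with hk
  set Col : Finset (Sym2 V) → Prop :=
    fun E' => ∃ c : PC (fromEdgeSet (↑E' : Set (Sym2 V))) k, Total c with hColdef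
  have hGeq : fromEdgeSet (↑G.edgeFinset : Set (Sym2 V)) = G := by
    rw [coe_edgeFinset, fromEdgeSet_edgeSet]
  have hGncol : ¬ Col G.edgeFinset := by
    rintro ⟨c, hc⟩
    apply hcol
    have := edgeColorable_of_total c hc
    rwa [hGeq] at this
  have hT : (G.edgeFinset.powerset.filter (fun E' => ¬ Col E')).Nonempty :=
    ⟨G.edgeFinset, Finset.mem_filter.2 ⟨Finset.mem_powerset_self _, hGncol⟩⟩
  obtain ⟨E₀, hE₀mem, hE₀min⟩ := Finset.exists_min_image _ Finset.card hT
  rw [Finset.mem_filter, Finset.mem_powerset] at hE₀mem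
  obtain ⟨hE₀sub, hE₀ncol⟩ := hE₀mem
  set H : SimpleGraph V := fromEdgeSet (↑E₀ : Set (Sym2 V)) with hHdef
  haveI : DecidableRel H.Adj := fun u v =>
    decidable_of_iff (s(u, v) ∈ (↑E₀ : Set (Sym2 V)) ∧ u ≠ v) (fromEdgeSet_adj _).symm
  have hE₀edge : (↑E₀ : Set (Sym2 V)) ⊆ G.edgeSet := by
    intro e he
    rw [← coe_edgeFinset]
    exact_mod_cast hE₀sub he
  have hHle : H ≤ G := by
    rw [hHdef, ← fromEdgeSet_edgeSet G]
    exact fromEdgeSet_mono hE₀edge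
  have hdegle : ∀ v, H.degree v ≤ G.degree v := by
    intro v
    apply Finset.card_le_card
    intro u hu
    rw [mem_neighborFinset] at hu ⊢
    exact hHle hu
  have hdegk : ∀ v, H.degree v ≤ k := fun v => (hdegle v).trans (G.degree_le_maxDegree v)
  have hHncol : ¬ ∃ c : PC H k, Total c := hE₀ncol
  have hcrit : ∀ x y : V, H.Adj x y → ∃ c : PC H k, c.f x y = none ∧
      ∀ u v, H.Adj u v → ¬ Pr u v x y → c.f u v ≠ none := by
    intro x y hxy
    have he : s(x, y) ∈ E₀ := ((fromEdgeSet_adj _).1 hxy).1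
    have hlt : (E₀.erase s(x, y)).card < E₀.card := Finset.card_erase_lt_of_mem he
    have hsub2 : E₀.erase s(x, y) ⊆ G.edgeFinset := (Finset.erase_subset _ _).trans hE₀sub
    have hcol2 : Col (E₀.erase s(x, y)) := by
      by_contra hnc
      have hmem2 : E₀.erase s(x, y) ∈ G.edgeFinset.powerset.filter (fun E' => ¬ Col E') :=
        Finset.mem_filter.2 ⟨Finset.mem_powerset.2 hsub2, hnc⟩
      have := hE₀min _ hmem2
      omega
    obtain ⟨c₂, hc₂⟩ := hcol2
    have hle2 : fromEdgeSet (↑(E₀.erase s(x, y)) : Set (Sym2 V)) ≤ H := by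
      rw [hHdef]
      apply fromEdgeSet_mono
      intro e he'
      simp only [Finset.coe_erase, Set.mem_diff] at he'
      exact he'.1
    refine ⟨⟨c₂.f, c₂.symm, fun u v hne => hle2 (c₂.adj u v hne), c₂.proper⟩, ?_, ?_⟩
    · apply c₂.f_eq_none_of_not_adj
      rw [fromEdgeSet_adj]
      rintro ⟨hmem3, -⟩
      rw [Finset.mem_coe] at hmem3
      exact (Finset.notMem_erase _ _) hmem3
    · intro u v huv hpr
      apply hc₂
      rw [fromEdgeSet_adj]
      refine ⟨?_, huv.ne⟩
      rw [Finset.mem_coe, Finset.mem_erase]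
      refine ⟨fun hEq => hpr (Sym2.eq_iff.1 hEq), ((fromEdgeSet_adj _).1 huv).1⟩
  -- H has an edge
  have hE₀ne : E₀.Nonempty := by
    by_contra hne
    rw [Finset.not_nonempty_iff_eq_empty] at hne
    apply hE₀ncol
    refine ⟨⟨fun _ _ => none, fun _ _ => rfl, fun u v hv => absurd rfl hv,
      fun u v w hv _ => absurd rfl hv⟩, ?_⟩
    intro u v huv
    exfalso
    rw [hne] at huv
    simp at huv
  have hedge : ∃ a b : V, H.Adj a b := by
    obtain ⟨e, he⟩ := hE₀ne
    revert he
    refine Sym2.ind (fun a b he => ?_) e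
    refine ⟨a, b, (fromEdgeSet_adj _).2 ⟨he, ?_⟩⟩
    have h2 := hE₀edge (show s(a, b) ∈ (↑E₀ : Set (Sym2 V)) by exact_mod_cast he)
    rw [mem_edgeSet] at h2
    exact h2.ne
  have hkpos : 0 < k := by
    obtain ⟨a, b, hab⟩ := hedge
    have h1 : 0 < H.degree a := by
      rw [H.degree_pos_iff_exists_adj]
      exact ⟨b, hab⟩
    exact lt_of_lt_of_le h1 (hdegk a)
  set S : Set V := {v : V | H.degree v = k} with hSdef
  have hS2 : ∀ v ∈ S, ∃ z₁ z₂ : V, z₁ ≠ z₂ ∧ H.Adj v z₁ ∧ H.Adj v z₂ ∧ z₁ ∈ S ∧ z₂ ∈ S := by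
    intro v hv
    have hdegv : H.degree v = k := hv
    have hpos : 0 < H.degree v := hdegv ▸ hkpos
    rw [H.degree_pos_iff_exists_adj] at hpos
    obtain ⟨y₁, hy₁⟩ := hpos
    obtain ⟨z₁, hz₁, hz₁y, hz₁deg⟩ := val1 H hdegk hHncol hcrit hy₁
    obtain ⟨z₂, hz₂, hz₂z₁, hz₂deg⟩ := val1 H hdegk hHncol hcrit hz₁
    exact ⟨z₁, z₂, fun hEq => hz₂z₁ hEq.symm, hz₁, hz₂, hz₁deg, hz₂deg⟩
  have hSne : S.Nonempty := by
    obtain ⟨a, b, hab⟩ := hedge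
    obtain ⟨z, hz, -, hzdeg⟩ := val1 H hdegk hHncol hcrit hab
    exact ⟨z, hzdeg⟩
  have hsub : S ⊆ {v : V | G.degree v = G.maxDegree} := by
    intro v hv
    have h1 : H.degree v = k := hv
    have h2 := hdegle v
    have h3 := G.degree_le_maxDegree v
    show G.degree v = G.maxDegree
    omega
  haveI : Nonempty ↥S := hSne.to_subtype
  have hacS : (G.induce S).IsAcyclic := by
    let f : (G.induce S) →g (G.induce {v : V | G.degree v = G.maxDegree}) :=
      ⟨fun (w : ↥S) => (⟨w.1, hsub w.2⟩ : {v : V | G.degree v = G.maxDegree}),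
        fun {a b} hab => by exact hab⟩
    have hinj : Function.Injective ⇑f := by
      intro a b hab
      have : (f a).1 = (f b).1 := congrArg Subtype.val hab
      exact Subtype.ext this
    intro v p hp
    exact h _ ((Walk.map_isCycle_iff_of_injective hinj).2 hp)
  obtain ⟨v₀, hUN⟩ := leaf (G.induce S) hacS
  obtain ⟨z₁, z₂, hz12, ha1, ha2, hs1, hs2⟩ := hS2 v₀.1 v₀.2
  have k1 : (G.induce S).Adj v₀ ⟨z₁, hs1⟩ := hHle ha1
  have k2 : (G.induce S).Adj v₀ ⟨z₂, hs2⟩ := hHle ha2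
  exact hz12 (congrArg Subtype.val (hUN _ _ k1 k2))

end Final
end Fournier

/-- Fournier's theorem: if the maximum-degree vertices induce a forest, G is Class 1. -/
theorem fournier {V : Type*} [Fintype V] [DecidableEq V]
    (G : SimpleGraph V) [DecidableRel G.Adj]
    (h : (G.induce {v : V | G.degree v = G.maxDegree}).IsAcyclic) :
    EdgeColorable G G.maxDegree :=
  Fournier.fournier_main G h
end

section
/- Let G be a graph with a partial proper k-edge colouring c, let u and w be adjacent vertices with the edge uw uncoloured, and suppose there is a colour b missed at u and a colour a missed at w such that no path of edges alternately coloured a and b starting at w ends at u. Then after swapping colours a and b along the maximal alternating (a,b)-path starting at w, the colour b is missed at both u and w, so the colouring can be extended by assigning colour b to the edge uw. -/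
open SimpleGraph

/-- A partial proper `k`-edge colouring: coloured edges sharing a vertex get distinct colours. -/
def PartialProperEC {V : Type*} (G : SimpleGraph V) (k : ℕ) (c : G.edgeSet → Option (Fin k)) : Prop :=
  ∀ e f : G.edgeSet, e ≠ f → (∃ v : V, v ∈ (e : Sym2 V) ∧ v ∈ (f : Sym2 V)) →
    ∀ x : Fin k, c e = some x → c f ≠ some x

/-- The set of colours missed at `v`: not used on any coloured edge incident to `v`. -/
def missedColors {V : Type*} (G : SimpleGraph V) (k : ℕ) (c : G.edgeSet → Option (Fin k))
    (v : V) : Set (Fin k) :=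
  {x : Fin k | ∀ e : G.edgeSet, v ∈ (e : Sym2 V) → c e ≠ some x}

/-- Kempe-chain extension: if uw is uncoloured, u misses b, w misses a, and u is not
reachable from w in the (a,b)-subgraph, then after swapping a and b on w's component,
b is missed at both u and w, and assigning b to uw gives a partial proper colouring. -/
theorem kempe_extend {V : Type*} (G : SimpleGraph V) (k : ℕ)
    (c : G.edgeSet → Option (Fin k)) (hc : PartialProperEC G k c)
    (u w : V) (huw : G.Adj u w) (hunc : c ⟨s(u, w), G.mem_edgeSet.mpr huw⟩ = none)
    (a b : Fin k) (hab : a ≠ b)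
    (hbu : b ∈ missedColors G k c u) (haw : a ∈ missedColors G k c w)
    (H : SimpleGraph V)
    (hH : H = SimpleGraph.fromEdgeSet
      {s : Sym2 V | ∃ h : s ∈ G.edgeSet, c ⟨s, h⟩ = some a ∨ c ⟨s, h⟩ = some b})
    (hcomp : H.connectedComponentMk u ≠ H.connectedComponentMk w)
    (c' : G.edgeSet → Option (Fin k))
    (hswap : ∀ e : G.edgeSet, (c e = some a ∨ c e = some b) →
      (∃ v ∈ (e : Sym2 V), H.connectedComponentMk v = H.connectedComponentMk w) →
      c' e = if c e = some a then some b else some a)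
    (hkeep : ∀ e : G.edgeSet,
      ¬ ((c e = some a ∨ c e = some b) ∧
        ∃ v ∈ (e : Sym2 V), H.connectedComponentMk v = H.connectedComponentMk w) →
      c' e = c e)
    (c'' : G.edgeSet → Option (Fin k))
    (hext : c'' ⟨s(u, w), G.mem_edgeSet.mpr huw⟩ = some b)
    (hext' : ∀ e : G.edgeSet, e ≠ ⟨s(u, w), G.mem_edgeSet.mpr huw⟩ → c'' e = c' e) :
    b ∈ missedColors G k c' u ∧ b ∈ missedColors G k c' w ∧
      PartialProperEC G k c'' := by
  -- key: any two endpoints of an (a/b)-coloured edge lie in the same H-component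
  have key : ∀ (e : G.edgeSet), (c e = some a ∨ c e = some b) →
      ∀ v v' : V, v ∈ (e : Sym2 V) → v' ∈ (e : Sym2 V) →
      H.connectedComponentMk v = H.connectedComponentMk v' := by
    rintro ⟨s, hs⟩ hcol v v' hv hv'
    induction s using Sym2.inductionOn with
    | hf p q =>
      have hpq : p ≠ q := (G.mem_edgeSet.mp hs).ne
      have hadj : H.Adj p q := by
        rw [hH, SimpleGraph.fromEdgeSet_adj]
        exact ⟨⟨hs, hcol⟩, hpq⟩
      have hcc : H.connectedComponentMk p = H.connectedComponentMk q :=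
        SimpleGraph.ConnectedComponent.sound hadj.reachable
      rcases Sym2.mem_iff.mp hv with rfl | rfl <;>
        rcases Sym2.mem_iff.mp hv' with rfl | rfl <;> simp [hcc]
  have part1 : b ∈ missedColors G k c' u := by
    intro e hv heq
    by_cases hcol : c e = some a ∨ c e = some b
    · by_cases hreach : ∃ v ∈ (e : Sym2 V), H.connectedComponentMk v = H.connectedComponentMk w
      · obtain ⟨v', hv', hv'w⟩ := hreach
        exact hcomp ((key e hcol u v' hv hv').trans hv'w)
      · have := hkeep e (fun h => hreach h.2)
        rw [this] at heq
        rcases hcol with h | h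
        · rw [h] at heq; exact hab (Option.some_injective _ heq)
        · exact hbu e hv (heq ▸ h)
    · have := hkeep e (fun h => hcol h.1)
      rw [this] at heq
      exact hcol (Or.inr heq)
  have part2 : b ∈ missedColors G k c' w := by
    intro e hv heq
    by_cases hcol : c e = some a ∨ c e = some b
    · have hsw := hswap e hcol ⟨w, hv, rfl⟩
      rcases hcol with h | h
      · exact haw e hv h
      · rw [hsw, if_neg (by rw [h]; exact fun hh => hab (Option.some_injective _ hh).symm)] at heq
        exact hab (Option.some_injective _ heq)
    · have := hkeep e (fun h => hcol h.1)
      rw [this] at heq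
      exact hcol (Or.inr heq)
  refine ⟨part1, part2, ?_⟩
  -- c' is a partial proper colouring
  have hc' : PartialProperEC G k c' := by
    rintro e f hef ⟨v, hve, hvf⟩ x hxe hxf
    by_cases he : (c e = some a ∨ c e = some b) ∧
        ∃ v' ∈ (e : Sym2 V), H.connectedComponentMk v' = H.connectedComponentMk w
    · by_cases hf : (c f = some a ∨ c f = some b) ∧
          ∃ v' ∈ (f : Sym2 V), H.connectedComponentMk v' = H.connectedComponentMk w
      · have hse := hswap e he.1 he.2
        have hsf := hswap f hf.1 hf.2
        rw [hse] at hxe; rw [hsf] at hxf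
        rcases he.1 with h1 | h1 <;> rcases hf.1 with h2 | h2
        · exact hc e f hef ⟨v, hve, hvf⟩ a h1 h2
        · rw [if_pos h1] at hxe
          rw [if_neg (by rw [h2]; exact fun hh => hab (Option.some_injective _ hh).symm)] at hxf
          exact hab ((Option.some_injective _ hxf).trans (Option.some_injective _ hxe).symm)
        · rw [if_neg (by rw [h1]; exact fun hh => hab (Option.some_injective _ hh).symm)] at hxe
          rw [if_pos h2] at hxf
          exact hab ((Option.some_injective _ hxe).trans (Option.some_injective _ hxf).symm)
        · exact hc e f hef ⟨v, hve, hvf⟩ b h1 h2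
      · -- f is kept
        have hkf := hkeep f hf
        rw [hkf] at hxf
        -- x must be a or b
        have hse := hswap e he.1 he.2
        have hxab : x = a ∨ x = b := by
          rw [hse] at hxe
          by_cases h : c e = some a
          · rw [if_pos h] at hxe; right; exact (Option.some_injective _ hxe).symm
          · rw [if_neg h] at hxe; left; exact (Option.some_injective _ hxe).symm
        -- so f is coloured a or b, hence hf fails only on reach
        have hfcol : c f = some a ∨ c f = some b := by
          rcases hxab with rfl | rfl
          · exact Or.inl hxf
          · exact Or.inr hxf
        -- v is in w's component via e
        obtain ⟨v', hv', hv'w⟩ := he.2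
        have hvw : H.connectedComponentMk v = H.connectedComponentMk w :=
          (key e he.1 v v' hve hv').trans hv'w
        exact hf ⟨hfcol, v, hvf, hvw⟩
    · by_cases hf : (c f = some a ∨ c f = some b) ∧
          ∃ v' ∈ (f : Sym2 V), H.connectedComponentMk v' = H.connectedComponentMk w
      · have hke := hkeep e he
        rw [hke] at hxe
        have hsf := hswap f hf.1 hf.2
        have hxab : x = a ∨ x = b := by
          rw [hsf] at hxf
          by_cases h : c f = some a
          · rw [if_pos h] at hxf; right; exact (Option.some_injective _ hxf).symm
          · rw [if_neg h] at hxf; left; exact (Option.some_injective _ hxf).symm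
        have hecol : c e = some a ∨ c e = some b := by
          rcases hxab with rfl | rfl
          · exact Or.inl hxe
          · exact Or.inr hxe
        obtain ⟨v', hv', hv'w⟩ := hf.2
        have hvw : H.connectedComponentMk v = H.connectedComponentMk w :=
          (key f hf.1 v v' hvf hv').trans hv'w
        exact he ⟨hecol, v, hve, hvw⟩
      · have hke := hkeep e he
        have hkf := hkeep f hf
        rw [hke] at hxe; rw [hkf] at hxf
        exact hc e f hef ⟨v, hve, hvf⟩ x hxe hxf
  -- now c''
  rintro e f hef ⟨v, hve, hvf⟩ x hxe hxf
  set e0 : G.edgeSet := ⟨s(u, w), G.mem_edgeSet.mpr huw⟩ with he0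
  by_cases he : e = e0
  · have hf : f ≠ e0 := fun h => hef (he.trans h.symm)
    rw [hext' f hf] at hxf
    rw [he, hext] at hxe
    have hx : x = b := (Option.some_injective _ hxe).symm
    subst hx
    have hvuw : v ∈ (e0 : Sym2 V) := he ▸ hve
    rcases Sym2.mem_iff.mp hvuw with rfl | rfl
    · exact part1 f hvf hxf
    · exact part2 f hvf hxf
  · rw [hext' e he] at hxe
    by_cases hf : f = e0
    · rw [hf, hext] at hxf
      have hx : x = b := (Option.some_injective _ hxf).symm
      subst hx
      have hvuw : v ∈ (e0 : Sym2 V) := hf ▸ hvf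
      rcases Sym2.mem_iff.mp hvuw with rfl | rfl
      · exact part1 e hve hxe
      · exact part2 e hve hxe
    · rw [hext' f hf] at hxf
      exact hc' e f hef ⟨v, hve, hvf⟩ x hxe hxf
end
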